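/- arXiv:2110.06147 — 6 statements merged into one kernel-verified Lean document; each statement's English description precedes it below -/
import Mathlib

section
/- Let n ≥ 1 and let p(t,x,y) = (4πt)^{-n/2} exp(-|x-y|²/(4t)) be the Gauss–Weierstrass kernel on ℝⁿ. For every r, d ≥ 0, every α ∈ (0,1), every t > 0, all x, y ∈ ℝⁿ, and every a ∈ ℝⁿ with |a - ((1-α)x + αy)| ≤ d, one has ∫_{B(a,r)} p(αt, x, z) p((1-α)t, z, y) dz ≥ ( e^{-d²/(2α(1-α)t) - 1} / (2ⁿ Γ((n+2)/2)) ) · ( min(1, r²/(α(1-α)t)) )^{n/2} · p(t, x, y), where B(a,r) is the open Euclidean ball of center a and radius r and Γ is the Gamma function. -/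
open Real MeasureTheory

noncomputable def heatKernel (n : ℕ) (t : ℝ) (x y : EuclideanSpace ℝ (Fin n)) : ℝ :=
  (4 * Real.pi * t) ^ (-(n : ℝ) / 2) * Real.exp (-‖x - y‖ ^ 2 / (4 * t))

/-- For every `r, d ≥ 0`, `α ∈ (0,1)`, `t > 0`, `x, y ∈ ℝⁿ` and `a` with
`‖a - ((1-α)x + αy)‖ ≤ d`:
`∫_{B(a,r)} p(αt,x,z) p((1-α)t,z,y) dz
  ≥ (e^{-d²/(2α(1-α)t) - 1} / (2ⁿ Γ((n+2)/2))) · (min(1, r²/(α(1-α)t)))^{n/2} · p(t,x,y)`. -/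
theorem stmt1 (n : ℕ) (hn : 1 ≤ n) (r d : ℝ) (hr : 0 ≤ r) (hd : 0 ≤ d)
    (α t : ℝ) (hα0 : 0 < α) (hα1 : α < 1) (ht : 0 < t)
    (x y a : EuclideanSpace ℝ (Fin n))
    (ha : ‖a - ((1 - α) • x + α • y)‖ ≤ d) :
    (Real.exp (-d ^ 2 / (2 * α * (1 - α) * t) - 1) /
        (2 ^ n * Real.Gamma (((n : ℝ) + 2) / 2))) *
      (min 1 (r ^ 2 / (α * (1 - α) * t))) ^ ((n : ℝ) / 2) * heatKernel n t x y ≤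
    ∫ z in Metric.ball a r, heatKernel n (α * t) x z * heatKernel n ((1 - α) * t) z y := by
  have hβ : 0 < 1 - α := by linarith
  set s : ℝ := α * (1 - α) * t with hs_def
  have hs : 0 < s := by positivity
  set m : EuclideanSpace ℝ (Fin n) := (1 - α) • x + α • y with hm_def
  -- pointwise kernel identity
  have hkey : ∀ z, heatKernel n (α * t) x z * heatKernel n ((1 - α) * t) z y
      = heatKernel n t x y * heatKernel n s z m := by
    intro z
    have hnorm : (1 - α) * ‖x - z‖ ^ 2 + α * ‖z - y‖ ^ 2
        = α * (1 - α) * ‖x - y‖ ^ 2 + ‖z - m‖ ^ 2 := by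
      have hxz : x - z = α • (x - y) - (z - m) := by simp only [hm_def]; module
      have hzy : z - y = (z - m) + (1 - α) • (x - y) := by simp only [hm_def]; module
      rw [hxz, hzy, norm_sub_sq_real, norm_add_sq_real, norm_smul, norm_smul,
        real_inner_smul_left, real_inner_smul_right, real_inner_comm (z - m),
        Real.norm_eq_abs, Real.norm_eq_abs, abs_of_pos hα0, abs_of_pos hβ]
      ring
    unfold heatKernel
    rw [show ((4 * π * (α * t)) ^ (-(n : ℝ) / 2) * rexp (-‖x - z‖ ^ 2 / (4 * (α * t)))) *
        ((4 * π * ((1 - α) * t)) ^ (-(n : ℝ) / 2) * rexp (-‖z - y‖ ^ 2 / (4 * ((1 - α) * t))))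
        = ((4 * π * (α * t)) ^ (-(n : ℝ) / 2) * (4 * π * ((1 - α) * t)) ^ (-(n : ℝ) / 2)) *
          (rexp (-‖x - z‖ ^ 2 / (4 * (α * t))) * rexp (-‖z - y‖ ^ 2 / (4 * ((1 - α) * t)))) by ring,
      show ((4 * π * t) ^ (-(n : ℝ) / 2) * rexp (-‖x - y‖ ^ 2 / (4 * t))) *
        ((4 * π * s) ^ (-(n : ℝ) / 2) * rexp (-‖z - m‖ ^ 2 / (4 * s)))
        = ((4 * π * t) ^ (-(n : ℝ) / 2) * (4 * π * s) ^ (-(n : ℝ) / 2)) *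
          (rexp (-‖x - y‖ ^ 2 / (4 * t)) * rexp (-‖z - m‖ ^ 2 / (4 * s))) by ring,
      ← Real.mul_rpow (by positivity) (by positivity),
      ← Real.mul_rpow (by positivity) (by positivity),
      ← Real.exp_add, ← Real.exp_add]
    congr 2
    · rw [hs_def]; ring
    · rw [hs_def]; field_simp
      linear_combination (-1 : ℝ) * hnorm
  -- setup
  set r' : ℝ := min r (Real.sqrt s) with hr'_def
  have hr'0 : 0 ≤ r' := le_min hr (Real.sqrt_nonneg _)
  have hr's : r' ^ 2 ≤ s := by
    calc r' ^ 2 ≤ Real.sqrt s ^ 2 := by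
          apply pow_le_pow_left₀ hr'0 (min_le_right _ _)
      _ = s := Real.sq_sqrt hs.le
  set C : ℝ := (4 * π * s) ^ (-(n : ℝ) / 2) * rexp (-d ^ 2 / (2 * s) - 1 / 2) with hC_def
  have hgc : Continuous (fun z : EuclideanSpace ℝ (Fin n) => heatKernel n s z m) := by
    unfold heatKernel
    fun_prop
  have hg0 : ∀ z, 0 ≤ heatKernel n s z m := fun z => by
    unfold heatKernel; positivity
  have hgint : IntegrableOn (fun z => heatKernel n s z m) (Metric.ball a r) volume :=
    (hgc.locallyIntegrable.integrableOn_isCompact (isCompact_closedBall a r)).mono_set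
      Metric.ball_subset_closedBall
  have hgint' : IntegrableOn (fun z => heatKernel n s z m) (Metric.ball a r') volume :=
    hgint.mono_set (Metric.ball_subset_ball (min_le_left _ _))
  -- pointwise constant lower bound on the small ball
  have hconst : ∀ z ∈ Metric.ball a r', C ≤ heatKernel n s z m := by
    intro z hz
    have h1 : ‖z - m‖ ≤ r' + d := by
      calc ‖z - m‖ = dist z m := (dist_eq_norm z m).symm
        _ ≤ dist z a + dist a m := dist_triangle z a m
        _ ≤ r' + d := add_le_add (le_of_lt (Metric.mem_ball.mp hz)) (by rwa [dist_eq_norm])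
    have h2 : ‖z - m‖ ^ 2 ≤ 2 * s + 2 * d ^ 2 := by
      nlinarith [h1, norm_nonneg (z - m), sq_nonneg (r' - d), hr's, hr'0, hd]
    have hexp : -d ^ 2 / (2 * s) - 1 / 2 ≤ -‖z - m‖ ^ 2 / (4 * s) := by
      have heq : -d ^ 2 / (2 * s) - 1 / 2 = (-2 * d ^ 2 - 2 * s) / (4 * s) := by
        field_simp; ring
      rw [heq, div_le_div_iff_of_pos_right (by positivity : (0:ℝ) < 4 * s)]
      linarith
    unfold heatKernel
    rw [hC_def]
    exact mul_le_mul_of_nonneg_left (Real.exp_le_exp.mpr hexp)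
      (Real.rpow_nonneg (by positivity) _)
  -- integral lower bounds
  have : Nonempty (Fin n) := ⟨⟨0, hn⟩⟩
  have hΓpos : 0 < Real.Gamma ((n:ℝ) / 2 + 1) := Real.Gamma_pos_of_pos (by positivity)
  have hP : 0 < heatKernel n t x y := by unfold heatKernel; positivity
  have hint1 : C * (volume (Metric.ball a r')).toReal
      ≤ ∫ z in Metric.ball a r', heatKernel n s z m :=
    by have h := setIntegral_ge_of_const_le_real measurableSet_ball measure_ball_lt_top.ne hconst hgint'
       exact h
  have hint2 : (∫ z in Metric.ball a r', heatKernel n s z m)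
      ≤ ∫ z in Metric.ball a r, heatKernel n s z m :=
    setIntegral_mono_set hgint (Filter.Eventually.of_forall hg0)
      (Metric.ball_subset_ball (min_le_left _ _)).eventuallyLE
  have hvol : (volume (Metric.ball a r')).toReal
      = r' ^ n * (Real.sqrt π ^ n / Real.Gamma ((n:ℝ) / 2 + 1)) := by
    rw [EuclideanSpace.volume_ball, Fintype.card_fin, ENNReal.toReal_mul,
      ← ENNReal.ofReal_pow hr'0, ENNReal.toReal_ofReal (by positivity),
      ENNReal.toReal_ofReal
        (div_nonneg (pow_nonneg (Real.sqrt_nonneg _) _) hΓpos.le)]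
  -- the key constant comparison
  have hKC : Real.exp (-d ^ 2 / (2 * α * (1 - α) * t) - 1) /
        (2 ^ n * Real.Gamma (((n : ℝ) + 2) / 2)) * (min 1 (r ^ 2 / s)) ^ ((n : ℝ) / 2)
      ≤ C * (r' ^ n * (Real.sqrt π ^ n / Real.Gamma ((n:ℝ) / 2 + 1))) := by
    have hΓeq : Real.Gamma (((n : ℝ) + 2) / 2) = Real.Gamma ((n:ℝ) / 2 + 1) := by
      rw [show ((n:ℝ) + 2) / 2 = (n:ℝ) / 2 + 1 by ring]
    have hseq : 2 * α * (1 - α) * t = 2 * s := by rw [hs_def]; ring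
    rw [hΓeq, hseq]
    have hM : min 1 (r ^ 2 / s) = r' ^ 2 / s := by
      rcases le_total r (Real.sqrt s) with h | h
      · rw [hr'_def, min_eq_left h, min_eq_right]
        rw [div_le_one hs]
        calc r ^ 2 ≤ Real.sqrt s ^ 2 := pow_le_pow_left₀ hr h 2
          _ = s := Real.sq_sqrt hs.le
      · rw [hr'_def, min_eq_right h, Real.sq_sqrt hs.le, div_self hs.ne', min_eq_left]
        rw [le_div_iff₀ hs, one_mul]
        calc s = Real.sqrt s ^ 2 := (Real.sq_sqrt hs.le).symm
          _ ≤ r ^ 2 := pow_le_pow_left₀ (Real.sqrt_nonneg _) h 2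
    have hMpow : (r' ^ 2 / s) ^ ((n : ℝ) / 2) = (r' / Real.sqrt s) ^ n := by
      rw [show ((n:ℝ) / 2) = (1 / 2 : ℝ) * n by ring, Real.rpow_mul (by positivity),
        Real.rpow_natCast]
      congr 1
      rw [← Real.sqrt_eq_rpow, Real.sqrt_div (sq_nonneg r'), Real.sqrt_sq hr'0]
    rw [hM, hMpow, hC_def]
    have hrpow : (4 * π * s) ^ (-(n:ℝ) / 2) = ((2 * Real.sqrt π * Real.sqrt s) ^ n)⁻¹ := by
      rw [show (-(n:ℝ) / 2) = -((1 / 2 : ℝ) * n) by ring, Real.rpow_neg (by positivity),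
        Real.rpow_mul (by positivity), Real.rpow_natCast, ← Real.sqrt_eq_rpow]
      congr 2
      rw [Real.sqrt_mul (by positivity) s, Real.sqrt_mul (by norm_num : (0:ℝ) ≤ 4) π,
        show Real.sqrt 4 = 2 from by
          rw [show (4:ℝ) = 2 ^ 2 by norm_num, Real.sqrt_sq (by norm_num : (0:ℝ) ≤ 2)]]
    rw [hrpow]
    have hsp : 0 < Real.sqrt π := Real.sqrt_pos.mpr pi_pos
    have hss : 0 < Real.sqrt s := Real.sqrt_pos.mpr hs
    have hR : ((2 * Real.sqrt π * Real.sqrt s) ^ n)⁻¹ *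
          rexp (-d ^ 2 / (2 * s) - 1 / 2) *
          (r' ^ n * (Real.sqrt π ^ n / Real.Gamma ((n:ℝ) / 2 + 1)))
        = rexp (-d ^ 2 / (2 * s) - 1 / 2) / (2 ^ n * Real.Gamma ((n:ℝ) / 2 + 1)) *
          (r' / Real.sqrt s) ^ n := by
      rw [div_pow]
      field_simp
      ring
    rw [hR]
    apply mul_le_mul_of_nonneg_right _ (pow_nonneg (by positivity) n)
    rw [div_le_div_iff_of_pos_right (mul_pos (pow_pos two_pos n) hΓpos)]
    exact Real.exp_le_exp.mpr (by linarith)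
  -- put everything together
  have hrw : (∫ z in Metric.ball a r,
        heatKernel n (α * t) x z * heatKernel n ((1 - α) * t) z y)
      = heatKernel n t x y * ∫ z in Metric.ball a r, heatKernel n s z m := by
    simp only [hkey]
    exact integral_const_mul _ _
  rw [hrw]
  calc Real.exp (-d ^ 2 / (2 * α * (1 - α) * t) - 1) /
        (2 ^ n * Real.Gamma (((n : ℝ) + 2) / 2)) *
        (min 1 (r ^ 2 / s)) ^ ((n : ℝ) / 2) * heatKernel n t x y
      ≤ (C * (volume (Metric.ball a r')).toReal) * heatKernel n t x y := by
        apply mul_le_mul_of_nonneg_right _ hP.le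
        rw [hvol]; exact hKC
    _ = heatKernel n t x y * (C * (volume (Metric.ball a r')).toReal) := by ring
    _ ≤ heatKernel n t x y * ∫ z in Metric.ball a r, heatKernel n s z m :=
        mul_le_mul_of_nonneg_left (hint1.trans hint2) hP.le
end

section
/- Let n ≥ 1, let p(t,x,y) = (4πt)^{-n/2} exp(-|x-y|²/(4t)) be the Gauss–Weierstrass kernel on ℝⁿ, and let α, β ≥ 0. Let H₁, H₂ ⊆ ℝⁿ be closed half-spaces and set D = H₁ ∩ H₂, with δ_{H_i}(z) denoting the Euclidean distance from z to the boundary hyperplane ∂H_i. There is a constant C = C(n, α, β) > 0 such that for all x, y ∈ D and all t > 0, ∫_D p(t/2, x, z) p(t/2, z, y) (δ_{H₁}(z))^α (δ_{H₂}(z))^β dz ≤ C · p(t, x, y) · (√t + δ_{H₁}((x+y)/2))^α · (√t + δ_{H₂}((x+y)/2))^β. -/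
open MeasureTheory Real


lemma aux_rpow_add_le {a b p : ℝ} (ha : 0 ≤ a) (hb : 0 ≤ b) (hp : 0 ≤ p) :
    (a + b) ^ p ≤ 2 ^ p * (a ^ p + b ^ p) := by
  have hm : 0 ≤ max a b := le_max_of_le_left ha
  have h1 : a + b ≤ 2 * max a b := by
    rcases le_total a b with h | h
    · rw [max_eq_right h]; linarith
    · rw [max_eq_left h]; linarith
  calc (a + b) ^ p ≤ (2 * max a b) ^ p := Real.rpow_le_rpow (by positivity) h1 hp
    _ = 2 ^ p * (max a b) ^ p := Real.mul_rpow (by norm_num) hm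
    _ ≤ 2 ^ p * (a ^ p + b ^ p) := by
        have h2 : (max a b) ^ p ≤ a ^ p + b ^ p := by
          rcases max_cases a b with ⟨h3, _⟩ | ⟨h3, _⟩ <;> rw [h3]
          · nlinarith [Real.rpow_nonneg hb p]
          · nlinarith [Real.rpow_nonneg ha p]
        nlinarith [Real.rpow_nonneg (by norm_num : (0:ℝ) ≤ 2) p]

lemma aux_pow_le_exp {x : ℝ} (hx : 0 ≤ x) (k : ℕ) : x ^ k ≤ k.factorial * Real.exp x := by
  have h := Real.sum_le_exp_of_nonneg hx (k + 1)
  have h2 : x ^ k / k.factorial ≤ ∑ i ∈ Finset.range (k + 1), x ^ i / i.factorial := by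
    exact Finset.single_le_sum (f := fun i => x ^ i / i.factorial) (fun i _ => by positivity) (Finset.self_mem_range_succ k)
  have hk : (0:ℝ) < k.factorial := by positivity
  rw [div_le_iff₀ hk] at h2
  calc x ^ k ≤ (∑ i ∈ Finset.range (k+1), x ^ i / i.factorial) * k.factorial := h2
    _ ≤ Real.exp x * k.factorial := by nlinarith
    _ = k.factorial * Real.exp x := by ring

lemma aux_rpow_le {s γ : ℝ} (hs : 0 ≤ s) (hγ : 0 ≤ γ) :
    s ^ γ ≤ 1 + s ^ (2 * ⌈γ⌉₊) := by
  rcases le_total s 1 with h | h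
  · have := Real.rpow_le_one hs h hγ
    have : (0:ℝ) ≤ s ^ (2 * ⌈γ⌉₊) := by positivity
    linarith [Real.rpow_le_one hs h hγ]
  · have h1 : s ^ γ ≤ s ^ ((2 * ⌈γ⌉₊ : ℕ) : ℝ) := by
      apply Real.rpow_le_rpow_of_exponent_le h
      calc γ ≤ (⌈γ⌉₊ : ℝ) := Nat.le_ceil γ
        _ ≤ ((2 * ⌈γ⌉₊ : ℕ) : ℝ) := by push_cast; nlinarith [Nat.cast_nonneg (α := ℝ) ⌈γ⌉₊]
    rw [Real.rpow_natCast] at h1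
    have : (0:ℝ) ≤ s ^ (2 * ⌈γ⌉₊) := by positivity
    linarith


lemma aux_integrable_base (n : ℕ) :
    Integrable (fun w : EuclideanSpace ℝ (Fin n) => Real.exp (-(1/2) * ‖w‖ ^ 2)) := by
  have h := (GaussianFourier.integrable_cexp_neg_mul_sq_norm_add (V := EuclideanSpace ℝ (Fin n))
    (b := (1/2 : ℂ)) (by norm_num) 0 0).norm
  refine h.congr ?_
  filter_upwards with v
  simp [Complex.norm_exp]
  norm_cast

lemma aux_integrable_gauss_rpow (n : ℕ) {γ : ℝ} (hγ : 0 ≤ γ) :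
    Integrable (fun w : EuclideanSpace ℝ (Fin n) => Real.exp (-‖w‖ ^ 2) * ‖w‖ ^ γ) := by
  set k : ℕ := ⌈γ⌉₊
  have hbase := aux_integrable_base n
  refine Integrable.mono' (hbase.const_mul (1 + 2 ^ k * k.factorial)) ?_ ?_
  · apply Continuous.aestronglyMeasurable
    exact (Real.continuous_exp.comp (continuous_norm.pow 2).neg).mul
      (continuous_norm.rpow_const (fun w => Or.inr hγ))
  · filter_upwards with w
    set s : ℝ := ‖w‖ with hs
    have hs0 : 0 ≤ s := norm_nonneg w
    rw [Real.norm_eq_abs, abs_of_nonneg (by positivity)]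
    have h1 : s ^ γ ≤ 1 + s ^ (2 * k) := aux_rpow_le hs0 hγ
    -- s ^ (2k) * exp (-s^2) ≤ 2^k k! exp(-(1/2) s^2)
    have h2 : (s ^ 2 / 2) ^ k ≤ k.factorial * Real.exp (s ^ 2 / 2) := aux_pow_le_exp (by positivity) k
    have h3 : s ^ (2 * k) ≤ 2 ^ k * k.factorial * Real.exp (s ^ 2 / 2) := by
      have : s ^ (2 * k) = (s ^ 2 / 2) ^ k * 2 ^ k := by
        rw [div_pow, pow_mul]; field_simp
      rw [this]
      nlinarith [pow_nonneg (by norm_num : (0:ℝ) ≤ 2) k]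
    have hexp : Real.exp (-s ^ 2) * Real.exp (s ^ 2 / 2) = Real.exp (-(1/2) * s ^ 2) := by
      rw [← Real.exp_add]; ring_nf
    have hE : (0:ℝ) < Real.exp (-s ^ 2) := Real.exp_pos _
    calc Real.exp (-s ^ 2) * s ^ γ ≤ Real.exp (-s ^ 2) * (1 + s ^ (2 * k)) := by nlinarith
      _ ≤ Real.exp (-s ^ 2) * (1 + 2 ^ k * k.factorial * Real.exp (s ^ 2 / 2)) := by nlinarith
      _ ≤ (1 + 2 ^ k * k.factorial) * Real.exp (-(1/2) * s ^ 2) := by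
          have h4 : Real.exp (-s ^ 2) ≤ Real.exp (-(1/2) * s ^ 2) :=
            Real.exp_le_exp.mpr (by nlinarith)
          have h5 : (0:ℝ) ≤ 2 ^ k * (k.factorial:ℝ) := by positivity
          nlinarith [Real.exp_pos (-(1/2) * s ^ 2)]
lemma aux_integrable_shift (n : ℕ) {γ t : ℝ} (hγ : 0 ≤ γ) (ht : 0 < t)
    (m : EuclideanSpace ℝ (Fin n)) :
    Integrable (fun z : EuclideanSpace ℝ (Fin n) =>
      Real.exp (-‖z - m‖ ^ 2 / t) * ‖z - m‖ ^ γ) := by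
  have hst : (0:ℝ) < Real.sqrt t := Real.sqrt_pos.mpr ht
  have hbase : Integrable (fun u : EuclideanSpace ℝ (Fin n) =>
      Real.exp (-‖u‖ ^ 2 / t) * ‖u‖ ^ γ) := by
    rw [← integrable_comp_smul_iff (volume : Measure (EuclideanSpace ℝ (Fin n)))
      (fun u => Real.exp (-‖u‖ ^ 2 / t) * ‖u‖ ^ γ) (ne_of_gt hst)]
    have heq : ∀ w : EuclideanSpace ℝ (Fin n),
        Real.exp (-‖Real.sqrt t • w‖ ^ 2 / t) * ‖Real.sqrt t • w‖ ^ γ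
          = Real.sqrt t ^ γ * (Real.exp (-‖w‖ ^ 2) * ‖w‖ ^ γ) := by
      intro w
      have hns : ‖Real.sqrt t • w‖ = Real.sqrt t * ‖w‖ := by
        rw [norm_smul, Real.norm_eq_abs, abs_of_pos hst]
      rw [hns, Real.mul_rpow hst.le (norm_nonneg w), mul_pow, Real.sq_sqrt ht.le]
      have : -(t * ‖w‖ ^ 2) / t = -‖w‖ ^ 2 := by field_simp
      rw [this]; ring
    simp only [heq]
    exact (aux_integrable_gauss_rpow n hγ).const_mul _
  exact hbase.comp_sub_right m

lemma aux_gauss_moment (n : ℕ) {γ t : ℝ} (hγ : 0 ≤ γ) (ht : 0 < t)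
    (m : EuclideanSpace ℝ (Fin n)) :
    (∫ z : EuclideanSpace ℝ (Fin n), Real.exp (-‖z - m‖ ^ 2 / t) * ‖z - m‖ ^ γ) =
      Real.sqrt t ^ ((n : ℝ) + γ) *
        ∫ w : EuclideanSpace ℝ (Fin n), Real.exp (-‖w‖ ^ 2) * ‖w‖ ^ γ := by
  have hst : (0:ℝ) < Real.sqrt t := Real.sqrt_pos.mpr ht
  have htr : (∫ z : EuclideanSpace ℝ (Fin n), Real.exp (-‖z - m‖ ^ 2 / t) * ‖z - m‖ ^ γ)
      = ∫ u : EuclideanSpace ℝ (Fin n), Real.exp (-‖u‖ ^ 2 / t) * ‖u‖ ^ γ :=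
    integral_sub_right_eq_self (fun u => Real.exp (-‖u‖ ^ 2 / t) * ‖u‖ ^ γ) m
  rw [htr]
  have hsc := MeasureTheory.Measure.integral_comp_smul_of_nonneg
    (volume : Measure (EuclideanSpace ℝ (Fin n)))
    (fun u => Real.exp (-‖u‖ ^ 2 / t) * ‖u‖ ^ γ) (Real.sqrt t) (hR := hst.le)
  have heq : ∀ w : EuclideanSpace ℝ (Fin n),
      Real.exp (-‖Real.sqrt t • w‖ ^ 2 / t) * ‖Real.sqrt t • w‖ ^ γ
        = Real.sqrt t ^ γ * (Real.exp (-‖w‖ ^ 2) * ‖w‖ ^ γ) := by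
    intro w
    have hns : ‖Real.sqrt t • w‖ = Real.sqrt t * ‖w‖ := by
      rw [norm_smul, Real.norm_eq_abs, abs_of_pos hst]
    rw [hns, Real.mul_rpow hst.le (norm_nonneg w), mul_pow, Real.sq_sqrt ht.le]
    have : -(t * ‖w‖ ^ 2) / t = -‖w‖ ^ 2 := by field_simp
    rw [this]; ring
  simp only [heq] at hsc
  rw [MeasureTheory.integral_const_mul, finrank_euclideanSpace_fin] at hsc
  have h1 : Real.sqrt t ^ γ * (∫ w : EuclideanSpace ℝ (Fin n), Real.exp (-‖w‖^2) * ‖w‖^γ)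
      = (Real.sqrt t ^ n)⁻¹ * ∫ u : EuclideanSpace ℝ (Fin n), Real.exp (-‖u‖^2/t) * ‖u‖^γ := by
    simpa [smul_eq_mul] using hsc
  have hpn : (0:ℝ) < Real.sqrt t ^ n := by positivity
  have h2 : (∫ u : EuclideanSpace ℝ (Fin n), Real.exp (-‖u‖^2/t) * ‖u‖^γ)
      = Real.sqrt t ^ n * (Real.sqrt t ^ γ *
        ∫ w : EuclideanSpace ℝ (Fin n), Real.exp (-‖w‖^2) * ‖w‖^γ) := by
    rw [h1]; field_simp
  rw [h2, Real.rpow_add hst, Real.rpow_natCast]; ring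

lemma aux_kernel_mul (n : ℕ) {t : ℝ} (ht : 0 < t) (x y z : EuclideanSpace ℝ (Fin n)) :
    heatKernel n (t / 2) x z * heatKernel n (t / 2) z y =
      heatKernel n t x y *
        ((Real.pi * t) ^ (-(n : ℝ) / 2) *
          Real.exp (-‖z - (2 : ℝ)⁻¹ • (x + y)‖ ^ 2 / t)) := by
  have hπ := Real.pi_pos
  set m : EuclideanSpace ℝ (Fin n) := (2 : ℝ)⁻¹ • (x + y) with hm
  have hmz : (x - z) - (z - y) = (2 : ℝ) • (m - z) := by
    rw [hm]; module
  have hp := parallelogram_law_with_norm ℝ (x - z) (z - y)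
  rw [sub_add_sub_cancel, hmz] at hp
  have h2 : ‖(2 : ℝ) • (m - z)‖ = 2 * ‖m - z‖ := by
    rw [norm_smul]; simp
  have hnm : ‖m - z‖ = ‖z - m‖ := norm_sub_rev _ _
  rw [h2, hnm] at hp
  have hpar : ‖x - z‖ ^ 2 + ‖z - y‖ ^ 2 = ‖x - y‖ ^ 2 / 2 + 2 * ‖z - m‖ ^ 2 := by
    nlinarith [hp]
  unfold heatKernel
  have hA : 4 * Real.pi * (t / 2) = 2 * Real.pi * t := by ring
  rw [hA]
  have hc : (2 * Real.pi * t) ^ (-(n : ℝ) / 2) * (2 * Real.pi * t) ^ (-(n : ℝ) / 2)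
      = (4 * Real.pi * t) ^ (-(n : ℝ) / 2) * (Real.pi * t) ^ (-(n : ℝ) / 2) := by
    rw [← Real.mul_rpow (by positivity) (by positivity),
      ← Real.mul_rpow (by positivity) (by positivity)]
    congr 1; ring
  have he : Real.exp (-‖x - z‖ ^ 2 / (2 * t)) * Real.exp (-‖z - y‖ ^ 2 / (2 * t))
      = Real.exp (-‖x - y‖ ^ 2 / (4 * t)) * Real.exp (-‖z - m‖ ^ 2 / t) := by
    rw [← Real.exp_add, ← Real.exp_add]
    congr 1
    field_simp
    linear_combination (-4) * hpar
  have h2t : 4 * (t / 2) = 2 * t := by ring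
  rw [h2t]
  calc (2 * Real.pi * t) ^ (-(n : ℝ) / 2) * Real.exp (-‖x - z‖ ^ 2 / (2 * t)) *
        ((2 * Real.pi * t) ^ (-(n : ℝ) / 2) * Real.exp (-‖z - y‖ ^ 2 / (2 * t)))
      = ((2 * Real.pi * t) ^ (-(n : ℝ) / 2) * (2 * Real.pi * t) ^ (-(n : ℝ) / 2)) *
        (Real.exp (-‖x - z‖ ^ 2 / (2 * t)) * Real.exp (-‖z - y‖ ^ 2 / (2 * t))) := by ring
    _ = ((4 * Real.pi * t) ^ (-(n : ℝ) / 2) * (Real.pi * t) ^ (-(n : ℝ) / 2)) *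
        (Real.exp (-‖x - y‖ ^ 2 / (4 * t)) * Real.exp (-‖z - m‖ ^ 2 / t)) := by rw [hc, he]
    _ = _ := by ring

set_option maxHeartbeats 1000000 in
/-- Let `H₁ = {z : z·v₁ ≥ c₁}`, `H₂ = {z : z·v₂ ≥ c₂}` be closed half-spaces (with unit
normals) and `D = H₁ ∩ H₂`, and let `δ_{Hᵢ}(z) = z·vᵢ - cᵢ` be the distance of `z ∈ Hᵢ` to
the boundary hyperplane. For `α, β ≥ 0` there is `C = C(n,α,β) > 0` such that for all
`x, y ∈ D` and `t > 0`:
`∫_D p(t/2,x,z) p(t/2,z,y) δ_{H₁}(z)^α δ_{H₂}(z)^β dz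
  ≤ C p(t,x,y) (√t + δ_{H₁}((x+y)/2))^α (√t + δ_{H₂}((x+y)/2))^β`. -/
theorem stmt3 (n : ℕ) (hn : 1 ≤ n) (α β : ℝ) (hα : 0 ≤ α) (hβ : 0 ≤ β) :
    ∃ C : ℝ, 0 < C ∧
      ∀ (v₁ v₂ : EuclideanSpace ℝ (Fin n)) (c₁ c₂ : ℝ), ‖v₁‖ = 1 → ‖v₂‖ = 1 →
        ∀ (x y : EuclideanSpace ℝ (Fin n)) (t : ℝ), 0 < t →
          x ∈ {z : EuclideanSpace ℝ (Fin n) | c₁ ≤ (inner ℝ z v₁ : ℝ) ∧ c₂ ≤ (inner ℝ z v₂ : ℝ)} →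
          y ∈ {z : EuclideanSpace ℝ (Fin n) | c₁ ≤ (inner ℝ z v₁ : ℝ) ∧ c₂ ≤ (inner ℝ z v₂ : ℝ)} →
          (∫ z in {z : EuclideanSpace ℝ (Fin n) |
                c₁ ≤ (inner ℝ z v₁ : ℝ) ∧ c₂ ≤ (inner ℝ z v₂ : ℝ)},
              heatKernel n (t / 2) x z * heatKernel n (t / 2) z y *
                ((inner ℝ z v₁ : ℝ) - c₁) ^ α * ((inner ℝ z v₂ : ℝ) - c₂) ^ β) ≤
            C * heatKernel n t x y *
              (Real.sqrt t + ((inner ℝ ((2 : ℝ)⁻¹ • (x + y)) v₁ : ℝ) - c₁)) ^ α *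
              (Real.sqrt t + ((inner ℝ ((2 : ℝ)⁻¹ • (x + y)) v₂ : ℝ) - c₂)) ^ β := by
  classical
  have hπ := Real.pi_pos
  set Kf : ℝ → ℝ := fun γ =>
    ∫ w : EuclideanSpace ℝ (Fin n), Real.exp (-‖w‖ ^ 2) * ‖w‖ ^ γ with hKf
  have hKnn : ∀ γ : ℝ, 0 ≤ Kf γ := fun γ => integral_nonneg fun w => by positivity
  set S : ℝ := Kf 0 + Kf α + Kf β + Kf (α + β) with hS
  have hS0 : 0 ≤ S := by
    have := hKnn 0; have := hKnn α; have := hKnn β; have := hKnn (α + β); linarith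
  refine ⟨2 ^ (α + β) * Real.pi ^ (-(n : ℝ) / 2) * S + 1, by positivity, ?_⟩
  intro v₁ v₂ c₁ c₂ hv₁ hv₂ x y t ht hx hy
  set m : EuclideanSpace ℝ (Fin n) := (2 : ℝ)⁻¹ • (x + y) with hm
  set st : ℝ := Real.sqrt t with hst'
  have hst : 0 < st := Real.sqrt_pos.mpr ht
  set δ₁ : ℝ := (inner ℝ m v₁ : ℝ) - c₁ with hδ₁
  set δ₂ : ℝ := (inner ℝ m v₂ : ℝ) - c₂ with hδ₂
  have hmean : ∀ v : EuclideanSpace ℝ (Fin n),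
      (inner ℝ m v : ℝ) = 2⁻¹ * ((inner ℝ x v : ℝ) + (inner ℝ y v : ℝ)) := by
    intro v; rw [hm, real_inner_smul_left, inner_add_left]
  have hδ₁0 : 0 ≤ δ₁ := by
    have h := hmean v₁; rw [hδ₁, h]; have h1 := hx.1; have h2 := hy.1; linarith
  have hδ₂0 : 0 ≤ δ₂ := by
    have h := hmean v₂; rw [hδ₂, h]; have h1 := hx.2; have h2 := hy.2; linarith
  set P : ℝ := heatKernel n t x y with hP'
  have hP : 0 < P := by rw [hP']; unfold heatKernel; positivity
  set A : ℝ := st + δ₁ with hA'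
  set B : ℝ := st + δ₂ with hB'
  have hA0 : 0 < A := by rw [hA']; linarith
  have hB0 : 0 < B := by rw [hB']; linarith
  set D : Set (EuclideanSpace ℝ (Fin n)) :=
    {z : EuclideanSpace ℝ (Fin n) | c₁ ≤ (inner ℝ z v₁ : ℝ) ∧ c₂ ≤ (inner ℝ z v₂ : ℝ)} with hD'
  have hD : MeasurableSet D := by
    have h1 : Continuous fun z : EuclideanSpace ℝ (Fin n) => (inner ℝ z v₁ : ℝ) :=
      continuous_id.inner continuous_const
    have h2 : Continuous fun z : EuclideanSpace ℝ (Fin n) => (inner ℝ z v₂ : ℝ) :=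
      continuous_id.inner continuous_const
    exact (measurableSet_le measurable_const h1.measurable).inter
      (measurableSet_le measurable_const h2.measurable)
  -- the four integrable Gaussian moment functions
  have Ig : ∀ γ : ℝ, 0 ≤ γ → Integrable
      (fun z : EuclideanSpace ℝ (Fin n) => Real.exp (-‖z - m‖ ^ 2 / t) * ‖z - m‖ ^ γ) :=
    fun γ hγ => aux_integrable_shift n hγ ht m
  -- the comparison function F
  set F : EuclideanSpace ℝ (Fin n) → ℝ := fun z =>
    Real.exp (-‖z - m‖ ^ 2 / t) *
      ((δ₁ ^ α + ‖z - m‖ ^ α) * (δ₂ ^ β + ‖z - m‖ ^ β)) with hF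
  have hFsum : ∀ z : EuclideanSpace ℝ (Fin n), F z =
      δ₁ ^ α * δ₂ ^ β * (Real.exp (-‖z - m‖ ^ 2 / t) * ‖z - m‖ ^ (0 : ℝ)) +
      δ₁ ^ α * (Real.exp (-‖z - m‖ ^ 2 / t) * ‖z - m‖ ^ β) +
      δ₂ ^ β * (Real.exp (-‖z - m‖ ^ 2 / t) * ‖z - m‖ ^ α) +
      Real.exp (-‖z - m‖ ^ 2 / t) * ‖z - m‖ ^ (α + β) := by
    intro z
    rw [hF]
    have hr : (0 : ℝ) ≤ ‖z - m‖ := norm_nonneg _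
    rw [Real.rpow_add_of_nonneg hr hα hβ, Real.rpow_zero]
    ring
  have i0 : Integrable (fun z : EuclideanSpace ℝ (Fin n) =>
      δ₁ ^ α * δ₂ ^ β * (Real.exp (-‖z - m‖ ^ 2 / t) * ‖z - m‖ ^ (0:ℝ))) :=
    (Ig 0 le_rfl).const_mul _
  have i1 : Integrable (fun z : EuclideanSpace ℝ (Fin n) =>
      δ₁ ^ α * (Real.exp (-‖z - m‖ ^ 2 / t) * ‖z - m‖ ^ β)) :=
    (Ig β hβ).const_mul _
  have i2 : Integrable (fun z : EuclideanSpace ℝ (Fin n) =>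
      δ₂ ^ β * (Real.exp (-‖z - m‖ ^ 2 / t) * ‖z - m‖ ^ α)) :=
    (Ig α hα).const_mul _
  have i3 : Integrable (fun z : EuclideanSpace ℝ (Fin n) =>
      Real.exp (-‖z - m‖ ^ 2 / t) * ‖z - m‖ ^ (α + β)) :=
    Ig (α + β) (by positivity)
  have i01 : Integrable (fun z : EuclideanSpace ℝ (Fin n) =>
      δ₁ ^ α * δ₂ ^ β * (Real.exp (-‖z - m‖ ^ 2 / t) * ‖z - m‖ ^ (0:ℝ)) +
      δ₁ ^ α * (Real.exp (-‖z - m‖ ^ 2 / t) * ‖z - m‖ ^ β)) := i0.add i1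
  have i012 : Integrable (fun z : EuclideanSpace ℝ (Fin n) =>
      (δ₁ ^ α * δ₂ ^ β * (Real.exp (-‖z - m‖ ^ 2 / t) * ‖z - m‖ ^ (0:ℝ)) +
      δ₁ ^ α * (Real.exp (-‖z - m‖ ^ 2 / t) * ‖z - m‖ ^ β)) +
      δ₂ ^ β * (Real.exp (-‖z - m‖ ^ 2 / t) * ‖z - m‖ ^ α)) := i01.add i2
  have hFint : Integrable F := by
    have h := i012.add i3
    exact h.congr (Filter.Eventually.of_forall fun z => (hFsum z).symm)
  have hF0 : ∀ z, 0 ≤ F z := by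
    intro z; rw [hF]
    have hr : (0 : ℝ) ≤ ‖z - m‖ := norm_nonneg _
    positivity
  -- value of ∫ F
  have hFval : (∫ z, F z) =
      δ₁ ^ α * δ₂ ^ β * (st ^ ((n : ℝ) + 0) * Kf 0) +
      δ₁ ^ α * (st ^ ((n : ℝ) + β) * Kf β) +
      δ₂ ^ β * (st ^ ((n : ℝ) + α) * Kf α) +
      st ^ ((n : ℝ) + (α + β)) * Kf (α + β) := by
    rw [integral_congr_ae (Filter.Eventually.of_forall hFsum)]
    rw [integral_add i012 i3, integral_add i01 i2, integral_add i0 i1,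
      MeasureTheory.integral_const_mul, MeasureTheory.integral_const_mul,
      MeasureTheory.integral_const_mul,
      aux_gauss_moment n le_rfl ht m, aux_gauss_moment n hβ ht m,
      aux_gauss_moment n hα ht m, aux_gauss_moment n (by positivity : (0:ℝ) ≤ α + β) ht m]
  -- bound ∫ F
  have hb1 : δ₁ ^ α ≤ A ^ α :=
    Real.rpow_le_rpow hδ₁0 (by rw [hA']; linarith) hα
  have hb2 : st ^ α ≤ A ^ α :=
    Real.rpow_le_rpow hst.le (by rw [hA']; linarith) hα
  have hb3 : δ₂ ^ β ≤ B ^ β :=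
    Real.rpow_le_rpow hδ₂0 (by rw [hB']; linarith) hβ
  have hb4 : st ^ β ≤ B ^ β :=
    Real.rpow_le_rpow hst.le (by rw [hB']; linarith) hβ
  have hAp : 0 ≤ A ^ α := Real.rpow_nonneg hA0.le α
  have hBp : 0 ≤ B ^ β := Real.rpow_nonneg hB0.le β
  have hd1p : 0 ≤ δ₁ ^ α := Real.rpow_nonneg hδ₁0 α
  have hd2p : 0 ≤ δ₂ ^ β := Real.rpow_nonneg hδ₂0 β
  have hstα : 0 ≤ st ^ α := Real.rpow_nonneg hst.le α
  have hstβ : 0 ≤ st ^ β := Real.rpow_nonneg hst.le β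
  have hbr : (∫ z, F z) ≤ st ^ (n : ℝ) * (S * (A ^ α * B ^ β)) := by
    rw [hFval]
    have e0 : st ^ ((n : ℝ) + 0) = st ^ (n : ℝ) * st ^ (0 : ℝ) := Real.rpow_add hst _ _
    have eβ : st ^ ((n : ℝ) + β) = st ^ (n : ℝ) * st ^ β := Real.rpow_add hst _ _
    have eα : st ^ ((n : ℝ) + α) = st ^ (n : ℝ) * st ^ α := Real.rpow_add hst _ _
    have eαβ : st ^ ((n : ℝ) + (α + β)) = st ^ (n : ℝ) * (st ^ α * st ^ β) := by
      rw [Real.rpow_add hst, Real.rpow_add hst]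
    rw [e0, eβ, eα, eαβ, Real.rpow_zero]
    have hN : 0 ≤ st ^ (n : ℝ) := Real.rpow_nonneg hst.le _
    have k0 := hKnn 0; have kα := hKnn α; have kβ := hKnn β; have kαβ := hKnn (α + β)
    have m1 : δ₁ ^ α * δ₂ ^ β ≤ A ^ α * B ^ β := mul_le_mul hb1 hb3 hd2p hAp
    have m2 : δ₁ ^ α * st ^ β ≤ A ^ α * B ^ β := mul_le_mul hb1 hb4 hstβ hAp
    have m3 : δ₂ ^ β * st ^ α ≤ A ^ α * B ^ β := by
      calc δ₂ ^ β * st ^ α = st ^ α * δ₂ ^ β := by ring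
        _ ≤ A ^ α * B ^ β := mul_le_mul hb2 hb3 hd2p hAp
    have m4 : st ^ α * st ^ β ≤ A ^ α * B ^ β := mul_le_mul hb2 hb4 hstβ hAp
    have hN : 0 ≤ st ^ (n : ℝ) := Real.rpow_nonneg hst.le _
    have T1 : δ₁ ^ α * δ₂ ^ β * (st ^ (n : ℝ) * 1 * Kf 0)
        ≤ st ^ (n : ℝ) * (A ^ α * B ^ β * Kf 0) := by
      calc δ₁ ^ α * δ₂ ^ β * (st ^ (n : ℝ) * 1 * Kf 0)
          = st ^ (n : ℝ) * (δ₁ ^ α * δ₂ ^ β * Kf 0) := by ring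
        _ ≤ st ^ (n : ℝ) * (A ^ α * B ^ β * Kf 0) :=
            mul_le_mul_of_nonneg_left (mul_le_mul_of_nonneg_right m1 k0) hN
    have T2 : δ₁ ^ α * (st ^ (n : ℝ) * st ^ β * Kf β)
        ≤ st ^ (n : ℝ) * (A ^ α * B ^ β * Kf β) := by
      calc δ₁ ^ α * (st ^ (n : ℝ) * st ^ β * Kf β)
          = st ^ (n : ℝ) * (δ₁ ^ α * st ^ β * Kf β) := by ring
        _ ≤ st ^ (n : ℝ) * (A ^ α * B ^ β * Kf β) :=
            mul_le_mul_of_nonneg_left (mul_le_mul_of_nonneg_right m2 kβ) hN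
    have T3 : δ₂ ^ β * (st ^ (n : ℝ) * st ^ α * Kf α)
        ≤ st ^ (n : ℝ) * (A ^ α * B ^ β * Kf α) := by
      calc δ₂ ^ β * (st ^ (n : ℝ) * st ^ α * Kf α)
          = st ^ (n : ℝ) * (δ₂ ^ β * st ^ α * Kf α) := by ring
        _ ≤ st ^ (n : ℝ) * (A ^ α * B ^ β * Kf α) :=
            mul_le_mul_of_nonneg_left (mul_le_mul_of_nonneg_right m3 kα) hN
    have T4 : st ^ (n : ℝ) * (st ^ α * st ^ β) * Kf (α + β)
        ≤ st ^ (n : ℝ) * (A ^ α * B ^ β * Kf (α + β)) := by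
      calc st ^ (n : ℝ) * (st ^ α * st ^ β) * Kf (α + β)
          = st ^ (n : ℝ) * (st ^ α * st ^ β * Kf (α + β)) := by ring
        _ ≤ st ^ (n : ℝ) * (A ^ α * B ^ β * Kf (α + β)) :=
            mul_le_mul_of_nonneg_left (mul_le_mul_of_nonneg_right m4 kαβ) hN
    have hfin : st ^ (n : ℝ) * (A ^ α * B ^ β * Kf 0) + st ^ (n : ℝ) * (A ^ α * B ^ β * Kf β)
        + st ^ (n : ℝ) * (A ^ α * B ^ β * Kf α) + st ^ (n : ℝ) * (A ^ α * B ^ β * Kf (α + β))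
        = st ^ (n : ℝ) * (S * (A ^ α * B ^ β)) := by rw [hS]; ring
    linarith
  -- pointwise bound on D
  set cc : ℝ := P * (Real.pi * t) ^ (-(n : ℝ) / 2) * (2 ^ α * 2 ^ β) with hcc'
  have hcc0 : 0 ≤ cc := by
    rw [hcc']
    have : (0:ℝ) ≤ (Real.pi * t) ^ (-(n : ℝ) / 2) := Real.rpow_nonneg (by positivity) _
    have h2a : (0:ℝ) ≤ (2:ℝ) ^ α := Real.rpow_nonneg (by norm_num) α
    have h2b : (0:ℝ) ≤ (2:ℝ) ^ β := Real.rpow_nonneg (by norm_num) β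
    positivity
  have hcF : ∀ z ∈ D, heatKernel n (t / 2) x z * heatKernel n (t / 2) z y *
      ((inner ℝ z v₁ : ℝ) - c₁) ^ α * ((inner ℝ z v₂ : ℝ) - c₂) ^ β ≤ cc * F z := by
    intro z hz
    have hz1 : c₁ ≤ (inner ℝ z v₁ : ℝ) := hz.1
    have hz2 : c₂ ≤ (inner ℝ z v₂ : ℝ) := hz.2
    have hr : (0:ℝ) ≤ ‖z - m‖ := norm_nonneg _
    have hub1 : (inner ℝ z v₁ : ℝ) - c₁ ≤ δ₁ + ‖z - m‖ := by
      have h := real_inner_le_norm (z - m) v₁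
      rw [inner_sub_left, hv₁, mul_one] at h
      rw [hδ₁]; linarith
    have hub2 : (inner ℝ z v₂ : ℝ) - c₂ ≤ δ₂ + ‖z - m‖ := by
      have h := real_inner_le_norm (z - m) v₂
      rw [inner_sub_left, hv₂, mul_one] at h
      rw [hδ₂]; linarith
    have hB1 : ((inner ℝ z v₁ : ℝ) - c₁) ^ α ≤ 2 ^ α * (δ₁ ^ α + ‖z - m‖ ^ α) :=
      le_trans (Real.rpow_le_rpow (by linarith) hub1 hα) (aux_rpow_add_le hδ₁0 hr hα)
    have hB2 : ((inner ℝ z v₂ : ℝ) - c₂) ^ β ≤ 2 ^ β * (δ₂ ^ β + ‖z - m‖ ^ β) :=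
      le_trans (Real.rpow_le_rpow (by linarith) hub2 hβ) (aux_rpow_add_le hδ₂0 hr hβ)
    have hkm := aux_kernel_mul n ht x y z
    rw [← hm] at hkm
    rw [hkm, ← hP']
    have hQE : (0:ℝ) ≤ P * ((Real.pi * t) ^ (-(n : ℝ) / 2) * Real.exp (-‖z - m‖ ^ 2 / t)) := by
      have : (0:ℝ) ≤ (Real.pi * t) ^ (-(n : ℝ) / 2) := Real.rpow_nonneg (by positivity) _
      have := Real.exp_pos (-‖z - m‖ ^ 2 / t)
      positivity
    have hQE2 : (0:ℝ) ≤ P * ((Real.pi * t) ^ (-(n : ℝ) / 2) * Real.exp (-‖z - m‖ ^ 2 / t)) *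
        (2 ^ α * (δ₁ ^ α + ‖z - m‖ ^ α)) := by
      have h2a : (0:ℝ) ≤ (2:ℝ) ^ α := Real.rpow_nonneg (by norm_num) α
      have hsum : (0:ℝ) ≤ δ₁ ^ α + ‖z - m‖ ^ α :=
        add_nonneg (Real.rpow_nonneg hδ₁0 α) (Real.rpow_nonneg hr α)
      exact mul_nonneg hQE (mul_nonneg h2a hsum)
    calc P * ((Real.pi * t) ^ (-(n : ℝ) / 2) * Real.exp (-‖z - m‖ ^ 2 / t)) *
          ((inner ℝ z v₁ : ℝ) - c₁) ^ α * ((inner ℝ z v₂ : ℝ) - c₂) ^ β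
        ≤ P * ((Real.pi * t) ^ (-(n : ℝ) / 2) * Real.exp (-‖z - m‖ ^ 2 / t)) *
          (2 ^ α * (δ₁ ^ α + ‖z - m‖ ^ α)) * ((inner ℝ z v₂ : ℝ) - c₂) ^ β :=
          mul_le_mul_of_nonneg_right (mul_le_mul_of_nonneg_left hB1 hQE)
            (Real.rpow_nonneg (by linarith) β)
      _ ≤ P * ((Real.pi * t) ^ (-(n : ℝ) / 2) * Real.exp (-‖z - m‖ ^ 2 / t)) *
          (2 ^ α * (δ₁ ^ α + ‖z - m‖ ^ α)) * (2 ^ β * (δ₂ ^ β + ‖z - m‖ ^ β)) :=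
          mul_le_mul_of_nonneg_left hB2 hQE2
      _ = cc * F z := by rw [hcc', hF]; ring
  -- assemble
  have hfnonneg : ∀ z ∈ D, 0 ≤ heatKernel n (t / 2) x z * heatKernel n (t / 2) z y *
      ((inner ℝ z v₁ : ℝ) - c₁) ^ α * ((inner ℝ z v₂ : ℝ) - c₂) ^ β := by
    intro z hz
    have h1 : (0:ℝ) < heatKernel n (t / 2) x z := by unfold heatKernel; positivity
    have h2 : (0:ℝ) < heatKernel n (t / 2) z y := by unfold heatKernel; positivity
    have h3 : (0:ℝ) ≤ ((inner ℝ z v₁ : ℝ) - c₁) ^ α := Real.rpow_nonneg (by linarith [hz.1]) α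
    have h4 : (0:ℝ) ≤ ((inner ℝ z v₂ : ℝ) - c₂) ^ β := Real.rpow_nonneg (by linarith [hz.2]) β
    positivity
  have hcollapse : (Real.pi * t) ^ (-(n : ℝ) / 2) * st ^ (n : ℝ)
      = Real.pi ^ (-(n : ℝ) / 2) := by
    have hstn : st ^ (n : ℝ) = t ^ (1 / 2 * (n : ℝ)) := by
      rw [hst', Real.sqrt_eq_rpow, ← Real.rpow_mul ht.le]
    rw [Real.mul_rpow hπ.le ht.le, hstn, mul_assoc, ← Real.rpow_add ht,
      show -(n : ℝ) / 2 + 1 / 2 * (n : ℝ) = 0 by ring, Real.rpow_zero, mul_one]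
  calc (∫ z in D,
        heatKernel n (t / 2) x z * heatKernel n (t / 2) z y *
          ((inner ℝ z v₁ : ℝ) - c₁) ^ α * ((inner ℝ z v₂ : ℝ) - c₂) ^ β)
      ≤ ∫ z in D, cc * F z := by
        refine integral_mono_of_nonneg ?_ ((hFint.const_mul cc).restrict) ?_
        · exact (ae_restrict_iff' hD).mpr (Filter.Eventually.of_forall hfnonneg)
        · exact (ae_restrict_iff' hD).mpr (Filter.Eventually.of_forall hcF)
    _ ≤ ∫ z, cc * F z := by
        refine setIntegral_le_integral (hFint.const_mul cc) ?_
        exact Filter.Eventually.of_forall fun z => mul_nonneg hcc0 (hF0 z)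
    _ = cc * ∫ z, F z := MeasureTheory.integral_const_mul cc F
    _ ≤ cc * (st ^ (n : ℝ) * (S * (A ^ α * B ^ β))) := mul_le_mul_of_nonneg_left hbr hcc0
    _ ≤ (2 ^ (α + β) * Real.pi ^ (-(n : ℝ) / 2) * S + 1) * P * A ^ α * B ^ β := by
        have h2ab : (2:ℝ) ^ (α + β) = 2 ^ α * 2 ^ β := Real.rpow_add (by norm_num) α β
        have heq : cc * (st ^ (n : ℝ) * (S * (A ^ α * B ^ β)))
            = (2 ^ (α + β) * Real.pi ^ (-(n : ℝ) / 2) * S) * P * A ^ α * B ^ β := by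
          rw [hcc', h2ab]
          calc P * (Real.pi * t) ^ (-(n : ℝ) / 2) * (2 ^ α * 2 ^ β) *
                (st ^ (n : ℝ) * (S * (A ^ α * B ^ β)))
              = ((Real.pi * t) ^ (-(n : ℝ) / 2) * st ^ (n : ℝ)) *
                (2 ^ α * 2 ^ β * S * P * A ^ α * B ^ β) := by ring
            _ = (2 ^ α * 2 ^ β * Real.pi ^ (-(n : ℝ) / 2) * S) * P * A ^ α * B ^ β := by
                rw [hcollapse]; ring
        rw [heq]
        have hPAB : (0:ℝ) ≤ P * A ^ α * B ^ β :=
          mul_nonneg (mul_nonneg hP.le hAp) hBp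
        nlinarith [hPAB]
end

section
/- Let n ≥ 1 and let p(t,x,y) = (4πt)^{-n/2} exp(-|x-y|²/(4t)) be the Gauss–Weierstrass kernel on ℝⁿ. Let H₁ = {z : z·v₁ ≥ c₁} and H₂ = {z : z·v₂ ≥ c₂} be closed half-spaces with unit inward normals v₁, v₂ satisfying v₁·v₂ ≥ 0 (i.e. the angle between the half-spaces is at least π/2). Let x, y ∈ H₁ ∩ H₂ satisfy δ_{H₁}(x) ≤ δ_{H₂}(x) and δ_{H₁}(y) ≥ 2 δ_{H₂}(y), and let x̄ = x - 2δ_{H₁}(x)v₁ and ȳ = y - 2δ_{H₂}(y)v₂ be the reflections of x across ∂H₁ and of y across ∂H₂. Then for every t > 0, p(t,x,y) - p(t,x̄,y) - p(t,x,ȳ) + p(t,x̄,ȳ) ≤ 2 p(t,x,y) [ min(1, δ_{H₁}(x)δ_{H₂}(y)/t) + min(1, δ_{H₁}(x)δ_{H₁}(y)/t) · min(1, δ_{H₂}(x)δ_{H₂}(y)/t) ]. -/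
lemma key_ineq (u w m s : ℝ) (hu : 0 ≤ u) (hw : 0 ≤ w) (hm : 0 ≤ m)
    (hmu : m ≤ u) (hmw : m ≤ w) (hs0 : 0 ≤ s) (hs2 : s ≤ 2 * m) :
    1 - Real.exp (-u) - Real.exp (-w) + Real.exp (s - u - w) ≤
      2 * (min 1 m + min 1 u * min 1 w) := by
  have eb : ∀ a : ℝ, 0 ≤ a → 1 - Real.exp (-a) ≤ min 1 a := by
    intro a ha
    refine le_min ?_ ?_
    · have := Real.exp_nonneg (-a); linarith
    · have := Real.add_one_le_exp (-a); linarith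
  have enn : ∀ a : ℝ, 0 ≤ a → 0 ≤ 1 - Real.exp (-a) := by
    intro a ha
    have : Real.exp (-a) ≤ 1 := Real.exp_le_one_iff.2 (by linarith)
    linarith
  have hP : (1 - Real.exp (-u)) * (1 - Real.exp (-w)) ≤ min 1 u * min 1 w :=
    mul_le_mul (eb u hu) (eb w hw) (enn w hw) (le_min zero_le_one hu)
  -- second part
  have hprod : Real.exp (s - u - w) * Real.exp (-s) = Real.exp (-u) * Real.exp (-w) := by
    rw [← Real.exp_add, ← Real.exp_add]; ring_nf
  have hle1 : Real.exp (s - u - w) ≤ 1 := Real.exp_le_one_iff.2 (by linarith)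
  have hQs : Real.exp (s - u - w) - Real.exp (-u) * Real.exp (-w) ≤ s := by
    have h1 : Real.exp (s - u - w) - Real.exp (-u) * Real.exp (-w)
        = Real.exp (s - u - w) * (1 - Real.exp (-s)) := by rw [← hprod]; ring
    have h2 : Real.exp (s - u - w) * (1 - Real.exp (-s)) ≤ 1 * (1 - Real.exp (-s)) :=
      mul_le_mul_of_nonneg_right hle1 (enn s hs0)
    have h3 : 1 - Real.exp (-s) ≤ s := by
      have := Real.add_one_le_exp (-s); linarith
    linarith
  have hQ1 : Real.exp (s - u - w) - Real.exp (-u) * Real.exp (-w) ≤ 1 := by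
    have := mul_nonneg (Real.exp_nonneg (-u)) (Real.exp_nonneg (-w))
    linarith
  have hQ : Real.exp (s - u - w) - Real.exp (-u) * Real.exp (-w) ≤ 2 * min 1 m := by
    rcases le_total (1 : ℝ) m with h | h
    · rw [min_eq_left h]; linarith
    · rw [min_eq_right h]; linarith
  have hid : 1 - Real.exp (-u) - Real.exp (-w) + Real.exp (s - u - w)
      = (1 - Real.exp (-u)) * (1 - Real.exp (-w))
        + (Real.exp (s - u - w) - Real.exp (-u) * Real.exp (-w)) := by ring
  have hnn : 0 ≤ min 1 u * min 1 w :=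
    mul_nonneg (le_min zero_le_one hu) (le_min zero_le_one hw)
  linarith [hP, hQ]

lemma norm_expand {n : ℕ} (d v₁ v₂ : EuclideanSpace ℝ (Fin n)) (r s : ℝ) :
    ‖d - r • v₁ + s • v₂‖ ^ 2 = ‖d‖ ^ 2 + r ^ 2 * ‖v₁‖ ^ 2 + s ^ 2 * ‖v₂‖ ^ 2
      - 2 * r * (inner ℝ d v₁ : ℝ) + 2 * s * (inner ℝ d v₂ : ℝ)
      - 2 * r * s * (inner ℝ v₁ v₂ : ℝ) := by
  have h : ∀ z : EuclideanSpace ℝ (Fin n), ‖z‖ ^ 2 = (inner ℝ z z : ℝ) := fun z =>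
    (real_inner_self_eq_norm_sq z).symm
  simp only [h, inner_sub_left, inner_sub_right, inner_add_left, inner_add_right,
    real_inner_smul_left, real_inner_smul_right]
  rw [real_inner_comm v₁ d, real_inner_comm v₂ d, real_inner_comm v₂ v₁]
  ring

/-- Let `H₁ = {z : z·v₁ ≥ c₁}` and `H₂ = {z : z·v₂ ≥ c₂}` be closed half-spaces with unit
inward normals satisfying `v₁·v₂ ≥ 0` (angle at least `π/2`). Let `x, y ∈ H₁ ∩ H₂` with
`δ_{H₁}(x) ≤ δ_{H₂}(x)` and `δ_{H₁}(y) ≥ 2δ_{H₂}(y)`, and let `x̄ = x - 2δ_{H₁}(x)v₁`,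
`ȳ = y - 2δ_{H₂}(y)v₂` be the reflections across `∂H₁`, `∂H₂`. Then for all `t > 0`:
`p(t,x,y) - p(t,x̄,y) - p(t,x,ȳ) + p(t,x̄,ȳ)
  ≤ 2 p(t,x,y)[min(1, δ_{H₁}(x)δ_{H₂}(y)/t)
      + min(1, δ_{H₁}(x)δ_{H₁}(y)/t)·min(1, δ_{H₂}(x)δ_{H₂}(y)/t)]`. -/
theorem stmt6 (n : ℕ) (hn : 1 ≤ n) (v₁ v₂ : EuclideanSpace ℝ (Fin n)) (c₁ c₂ : ℝ)
    (hv₁ : ‖v₁‖ = 1) (hv₂ : ‖v₂‖ = 1) (hangle : 0 ≤ (inner ℝ v₁ v₂ : ℝ))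
    (x y : EuclideanSpace ℝ (Fin n))
    (hx₁ : c₁ ≤ (inner ℝ x v₁ : ℝ)) (hx₂ : c₂ ≤ (inner ℝ x v₂ : ℝ))
    (hy₁ : c₁ ≤ (inner ℝ y v₁ : ℝ)) (hy₂ : c₂ ≤ (inner ℝ y v₂ : ℝ))
    (hxord : (inner ℝ x v₁ : ℝ) - c₁ ≤ (inner ℝ x v₂ : ℝ) - c₂)
    (hyord : 2 * ((inner ℝ y v₂ : ℝ) - c₂) ≤ (inner ℝ y v₁ : ℝ) - c₁)
    (t : ℝ) (ht : 0 < t) :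
    heatKernel n t x y
      - heatKernel n t (x - (2 * ((inner ℝ x v₁ : ℝ) - c₁)) • v₁) y
      - heatKernel n t x (y - (2 * ((inner ℝ y v₂ : ℝ) - c₂)) • v₂)
      + heatKernel n t (x - (2 * ((inner ℝ x v₁ : ℝ) - c₁)) • v₁)
          (y - (2 * ((inner ℝ y v₂ : ℝ) - c₂)) • v₂) ≤
    2 * heatKernel n t x y *
      (min 1 (((inner ℝ x v₁ : ℝ) - c₁) * ((inner ℝ y v₂ : ℝ) - c₂) / t) +
        min 1 (((inner ℝ x v₁ : ℝ) - c₁) * ((inner ℝ y v₁ : ℝ) - c₁) / t) *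
          min 1 (((inner ℝ x v₂ : ℝ) - c₂) * ((inner ℝ y v₂ : ℝ) - c₂) / t)) := by
  set a₁ : ℝ := (inner ℝ x v₁ : ℝ) - c₁ with ha₁
  set a₂ : ℝ := (inner ℝ x v₂ : ℝ) - c₂ with ha₂
  set b₁ : ℝ := (inner ℝ y v₁ : ℝ) - c₁ with hb₁
  set b₂ : ℝ := (inner ℝ y v₂ : ℝ) - c₂ with hb₂
  set γ : ℝ := (inner ℝ v₁ v₂ : ℝ) with hγ
  have ha₁0 : 0 ≤ a₁ := by linarith
  have ha₂0 : 0 ≤ a₂ := by linarith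
  have hb₁0 : 0 ≤ b₁ := by linarith
  have hb₂0 : 0 ≤ b₂ := by linarith
  have hγ1 : γ ≤ 1 := by
    have := real_inner_le_norm v₁ v₂; rw [hv₁, hv₂] at this; simpa using this
  have hd₁ : (inner ℝ (x - y) v₁ : ℝ) = a₁ - b₁ := by
    simp [inner_sub_left, ha₁, hb₁]
  have hd₂ : (inner ℝ (x - y) v₂ : ℝ) = a₂ - b₂ := by
    simp [inner_sub_left, ha₂, hb₂]
  -- norm identities
  have hveq1 : x - (2 * a₁) • v₁ - y = x - y - (2 * a₁) • v₁ + (0 : ℝ) • v₂ := by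
    rw [zero_smul]; abel
  have hveq2 : x - (y - (2 * b₂) • v₂) = x - y - (0 : ℝ) • v₁ + (2 * b₂) • v₂ := by
    rw [zero_smul]; abel
  have hveq3 : x - (2 * a₁) • v₁ - (y - (2 * b₂) • v₂)
      = x - y - (2 * a₁) • v₁ + (2 * b₂) • v₂ := by abel
  have hn1 : ‖x - (2 * a₁) • v₁ - y‖ ^ 2 = ‖x - y‖ ^ 2 + 4 * (a₁ * b₁) := by
    rw [hveq1, norm_expand, hv₁, hv₂, hd₁, hd₂]; ring
  have hn2 : ‖x - (y - (2 * b₂) • v₂)‖ ^ 2 = ‖x - y‖ ^ 2 + 4 * (a₂ * b₂) := by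
    rw [hveq2, norm_expand, hv₁, hv₂, hd₁, hd₂]; ring
  have hn3 : ‖x - (2 * a₁) • v₁ - (y - (2 * b₂) • v₂)‖ ^ 2
      = ‖x - y‖ ^ 2 + 4 * (a₁ * b₁) + 4 * (a₂ * b₂) - 8 * γ * (a₁ * b₂) := by
    rw [hveq3, norm_expand, hv₁, hv₂, hd₁, hd₂]; ring
  -- heat kernel rewrites
  set C : ℝ := (4 * Real.pi * t) ^ (-(n : ℝ) / 2) with hC
  set E : ℝ := Real.exp (-‖x - y‖ ^ 2 / (4 * t)) with hE
  have hsplit : ∀ B : ℝ, Real.exp (-(‖x - y‖ ^ 2 + B) / (4 * t))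
      = E * Real.exp (-(B / (4 * t))) := by
    intro B
    rw [hE, ← Real.exp_add]
    congr 1
    field_simp
    ring
  have hk0 : heatKernel n t x y = C * E := rfl
  have hk1 : heatKernel n t (x - (2 * a₁) • v₁) y
      = C * E * Real.exp (-(a₁ * b₁ / t)) := by
    rw [heatKernel, hn1, hsplit]
    rw [show 4 * (a₁ * b₁) / (4 * t) = a₁ * b₁ / t by field_simp]
    ring
  have hk2 : heatKernel n t x (y - (2 * b₂) • v₂)
      = C * E * Real.exp (-(a₂ * b₂ / t)) := by
    rw [heatKernel, hn2, hsplit]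
    rw [show 4 * (a₂ * b₂) / (4 * t) = a₂ * b₂ / t by field_simp]
    ring
  have hk3 : heatKernel n t (x - (2 * a₁) • v₁) (y - (2 * b₂) • v₂)
      = C * E * Real.exp (2 * γ * (a₁ * b₂) / t - a₁ * b₁ / t - a₂ * b₂ / t) := by
    rw [heatKernel, show ‖x - (2 * a₁) • v₁ - (y - (2 * b₂) • v₂)‖ ^ 2
        = ‖x - y‖ ^ 2 + (4 * (a₁ * b₁) + 4 * (a₂ * b₂) - 8 * γ * (a₁ * b₂)) by
        rw [hn3]; ring]
    rw [hsplit, show -((4 * (a₁ * b₁) + 4 * (a₂ * b₂) - 8 * γ * (a₁ * b₂)) / (4 * t))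
        = 2 * γ * (a₁ * b₂) / t - a₁ * b₁ / t - a₂ * b₂ / t from by field_simp; ring]
    ring
  rw [hk0, hk1, hk2, hk3]
  have key := key_ineq (a₁ * b₁ / t) (a₂ * b₂ / t) (a₁ * b₂ / t) (2 * γ * (a₁ * b₂) / t)
    (by positivity) (by positivity) (by positivity)
    (by gcongr; linarith) (by gcongr)
    (by positivity)
    (by rw [show 2 * (a₁ * b₂ / t) = 2 * 1 * (a₁ * b₂) / t by ring]; gcongr)
  have hCE : 0 ≤ C * E := by
    have : (0:ℝ) < C := Real.rpow_pos_of_pos (by positivity) _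
    positivity
  calc C * E - C * E * Real.exp (-(a₁ * b₁ / t)) - C * E * Real.exp (-(a₂ * b₂ / t))
        + C * E * Real.exp (2 * γ * (a₁ * b₂) / t - a₁ * b₁ / t - a₂ * b₂ / t)
      = C * E * (1 - Real.exp (-(a₁ * b₁ / t)) - Real.exp (-(a₂ * b₂ / t))
          + Real.exp (2 * γ * (a₁ * b₂) / t - a₁ * b₁ / t - a₂ * b₂ / t)) := by ring
    _ ≤ C * E * (2 * (min 1 (a₁ * b₂ / t)
          + min 1 (a₁ * b₁ / t) * min 1 (a₂ * b₂ / t))) :=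
        mul_le_mul_of_nonneg_left key hCE
    _ = 2 * (C * E) * (min 1 (a₁ * b₂ / t)
          + min 1 (a₁ * b₁ / t) * min 1 (a₂ * b₂ / t)) := by ring
end

section
/- Let n ≥ 2 and let D ⊊ ℝⁿ be a nonempty open convex set. Write δ_D(x) = dist(x, ℝⁿ\D) for the distance to the complement of D. Let w, z be two distinct points of the boundary ∂D and let H be a supporting closed half-space of D at w, that is, a closed half-space with D ⊆ H and w ∈ ∂H; write δ_H(x) = dist(x, ℝⁿ\H). Then for all 0 < α ≤ β ≤ 1, setting p_α = (1-α)w + αz and p_β = (1-β)w + βz, one has δ_D(p_α) · δ_H(p_β) ≥ δ_D(p_β) · δ_H(p_α); equivalently, the function α ↦ δ_D((1-α)w + αz) / δ_H((1-α)w + αz) is non-increasing on (0,1]. -/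
open Metric


lemma le_infDist' {X : Type*} [MetricSpace X] {s : Set X} {x : X} {b : ℝ}
    (hs : s.Nonempty) (h : ∀ y ∈ s, b ≤ dist x y) : b ≤ Metric.infDist x s := by
  by_contra hb
  push_neg at hb
  rw [Metric.infDist_lt_iff hs] at hb
  obtain ⟨y, hy, hd⟩ := hb
  exact absurd (h y hy) (not_le.mpr hd)

-- halfspace distance lemma
lemma half {n : ℕ} (x v : EuclideanSpace ℝ (Fin n)) (c : ℝ) (hv : ‖v‖ = 1)
    (hx : c ≤ (inner ℝ x v : ℝ)) :
    Metric.infDist x {y : EuclideanSpace ℝ (Fin n) | c ≤ (inner ℝ y v : ℝ)}ᶜ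
      = (inner ℝ x v : ℝ) - c := by
  have hvne : v ≠ 0 := by intro h; rw [h, norm_zero] at hv; norm_num at hv
  have hne : ({y : EuclideanSpace ℝ (Fin n) | c ≤ (inner ℝ y v : ℝ)}ᶜ).Nonempty := by
    refine ⟨x - ((inner ℝ x v : ℝ) - c + 1) • v, ?_⟩
    simp only [Set.mem_compl_iff, Set.mem_setOf_eq, not_le]
    rw [inner_sub_left, real_inner_smul_left, real_inner_self_eq_norm_sq, hv]
    nlinarith
  apply le_antisymm
  · apply le_of_forall_pos_le_add
    intro ε hε
    have hmem : x - ((inner ℝ x v : ℝ) - c + ε) • v ∈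
        {y : EuclideanSpace ℝ (Fin n) | c ≤ (inner ℝ y v : ℝ)}ᶜ := by
      simp only [Set.mem_compl_iff, Set.mem_setOf_eq, not_le]
      rw [inner_sub_left, real_inner_smul_left, real_inner_self_eq_norm_sq, hv]
      nlinarith
    calc Metric.infDist x _ ≤ dist x (x - ((inner ℝ x v : ℝ) - c + ε) • v) :=
          Metric.infDist_le_dist_of_mem hmem
      _ = ‖((inner ℝ x v : ℝ) - c + ε) • v‖ := by rw [dist_eq_norm, show x - (x - ((inner ℝ x v : ℝ) - c + ε) • v) = ((inner ℝ x v : ℝ) - c + ε) • v by abel]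
      _ = (inner ℝ x v : ℝ) - c + ε := by
          rw [norm_smul, hv, mul_one, Real.norm_eq_abs, abs_of_pos (by linarith)]
  · apply le_infDist' hne
    intro y hy
    simp only [Set.mem_compl_iff, Set.mem_setOf_eq, not_le] at hy
    have h1 : (inner ℝ x v : ℝ) - c ≤ (inner ℝ (x - y) v : ℝ) := by
      rw [inner_sub_left]; linarith
    calc (inner ℝ x v : ℝ) - c ≤ (inner ℝ (x - y) v : ℝ) := h1
      _ ≤ ‖x - y‖ * ‖v‖ := real_inner_le_norm _ _
      _ = dist x y := by rw [hv, mul_one, dist_eq_norm]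

-- key concavity-from-boundary lemma
lemma key {n : ℕ} (D : Set (EuclideanSpace ℝ (Fin n))) (hDopen : IsOpen D)
    (hDconv : Convex ℝ D) (hne : Dᶜ.Nonempty) (w p : EuclideanSpace ℝ (Fin n))
    (hw : w ∈ closure D) (l : ℝ) (hl : 0 < l) (hl1 : l ≤ 1) :
    l * Metric.infDist p Dᶜ ≤ Metric.infDist ((1 - l) • w + l • p) Dᶜ := by
  apply le_infDist' hne
  intro y hy
  by_contra h
  push_neg at h
  set q := (1 - l) • w + l • p with hq
  have hpd : p + l⁻¹ • (y - q) ∈ D := by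
    by_contra hpD
    have h1 : Metric.infDist p Dᶜ ≤ dist p (p + l⁻¹ • (y - q)) :=
      Metric.infDist_le_dist_of_mem hpD
    have h2 : dist p (p + l⁻¹ • (y - q)) = l⁻¹ * dist q y := by
      rw [dist_eq_norm, show p - (p + l⁻¹ • (y - q)) = -(l⁻¹ • (y - q)) by abel,
        norm_neg, norm_smul, Real.norm_eq_abs, abs_of_pos (by positivity),
        dist_eq_norm, norm_sub_rev]
    have h3 := mul_lt_mul_of_pos_left h (inv_pos.mpr hl)
    rw [← mul_assoc, inv_mul_cancel₀ hl.ne', one_mul] at h3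
    linarith [h1.trans h2.le]
  have hyi : y ∈ interior D := by
    have heq : y = (1 - l) • w + l • (p + l⁻¹ • (y - q)) := by
      rw [smul_add, smul_smul, mul_inv_cancel₀ hl.ne', one_smul]
      rw [hq]; abel
    rw [heq]
    exact hDconv.combo_closure_interior_mem_interior hw
      (by rwa [hDopen.interior_eq]) (by linarith) hl (by ring)
  rw [hDopen.interior_eq] at hyi
  exact hy hyi


/-- Let `n ≥ 2` and `D ⊊ ℝⁿ` be a nonempty open convex set, with
`δ_D(x) = dist(x, ℝⁿ\D)`. Let `w ≠ z` be boundary points of `D` and let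
`H = {x : x·v ≥ c}` (with `‖v‖ = 1`) be a supporting closed half-space of `D` at `w`,
i.e. `D ⊆ H` and `w ∈ ∂H`. Then for `0 < α ≤ β ≤ 1`, with `p_α = (1-α)w + αz` and
`p_β = (1-β)w + βz`, one has `δ_D(p_α)·δ_H(p_β) ≥ δ_D(p_β)·δ_H(p_α)`;
i.e. `α ↦ δ_D(p_α)/δ_H(p_α)` is non-increasing on `(0,1]`. -/
theorem stmt7 (n : ℕ) (hn : 2 ≤ n) (D : Set (EuclideanSpace ℝ (Fin n)))
    (hDopen : IsOpen D) (hDconv : Convex ℝ D) (hDne : D.Nonempty)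
    (hDproper : D ≠ Set.univ)
    (w z : EuclideanSpace ℝ (Fin n)) (hw : w ∈ frontier D) (hz : z ∈ frontier D)
    (hwz : w ≠ z)
    (v : EuclideanSpace ℝ (Fin n)) (c : ℝ) (hv : ‖v‖ = 1)
    (hDH : D ⊆ {x : EuclideanSpace ℝ (Fin n) | c ≤ (inner ℝ x v : ℝ)})
    (hwH : (inner ℝ w v : ℝ) = c)
    (α β : ℝ) (hα : 0 < α) (hαβ : α ≤ β) (hβ : β ≤ 1) :
    Metric.infDist ((1 - β) • w + β • z) Dᶜ *
        Metric.infDist ((1 - α) • w + α • z)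
          {x : EuclideanSpace ℝ (Fin n) | c ≤ (inner ℝ x v : ℝ)}ᶜ ≤
      Metric.infDist ((1 - α) • w + α • z) Dᶜ *
        Metric.infDist ((1 - β) • w + β • z)
          {x : EuclideanSpace ℝ (Fin n) | c ≤ (inner ℝ x v : ℝ)}ᶜ := by
  have hb0 : (0:ℝ) < β := lt_of_lt_of_le hα hαβ
  have hDcne : Dᶜ.Nonempty := Set.nonempty_compl.mpr hDproper
  have hwcl : w ∈ closure D := frontier_subset_closure hw
  have hclosed : IsClosed {x : EuclideanSpace ℝ (Fin n) | c ≤ (inner ℝ x v : ℝ)} :=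
    isClosed_le continuous_const (continuous_id.inner continuous_const)
  have hzH : c ≤ (inner ℝ z v : ℝ) :=
    closure_minimal hDH hclosed (frontier_subset_closure hz)
  set t : ℝ := (inner ℝ z v : ℝ) - c with htdef
  have ht : 0 ≤ t := sub_nonneg.mpr hzH
  have hinner : ∀ γ : ℝ, (inner ℝ ((1 - γ) • w + γ • z) v : ℝ) = c + γ * t := by
    intro γ
    rw [inner_add_left, real_inner_smul_left, real_inner_smul_left, hwH]
    simp [htdef]; ring
  have hHa : Metric.infDist ((1 - α) • w + α • z)
      {x : EuclideanSpace ℝ (Fin n) | c ≤ (inner ℝ x v : ℝ)}ᶜ = α * t := by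
    rw [half _ _ _ hv (by rw [hinner]; nlinarith), hinner]; ring
  have hHb : Metric.infDist ((1 - β) • w + β • z)
      {x : EuclideanSpace ℝ (Fin n) | c ≤ (inner ℝ x v : ℝ)}ᶜ = β * t := by
    rw [half _ _ _ hv (by rw [hinner]; nlinarith), hinner]; ring
  have hsc : 1 - α / β + α / β * (1 - β) = 1 - α := by field_simp; ring
  have hpt : (1 - α/β) • w + (α/β) • ((1 - β) • w + β • z) = (1 - α) • w + α • z := by
    rw [smul_add, smul_smul, smul_smul, ← add_assoc, ← add_smul, hsc,
      div_mul_cancel₀ _ hb0.ne']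
  have hkey := key D hDopen hDconv hDcne w ((1 - β) • w + β • z) hwcl (α/β)
    (div_pos hα hb0) (by rw [div_le_one hb0]; exact hαβ)
  rw [hpt] at hkey
  rw [hHa, hHb]
  have h1 : Metric.infDist ((1 - β) • w + β • z) Dᶜ * (α * t)
      = (β * t) * (α / β * Metric.infDist ((1 - β) • w + β • z) Dᶜ) := by
    field_simp
  rw [h1]
  exact mul_le_mul_of_nonneg_left hkey (by positivity) |>.trans_eq (by ring)
end

section
/- Let n ≥ 2 and let D ⊊ ℝⁿ be a nonempty open convex set which is unbounded and strictly convex (for any two distinct points of the closure of D, the open segment joining them is contained in D), and such that at every boundary point of D there is exactly one supporting closed half-space of D. For w ∈ ∂D let H_w denote this unique supporting half-space at w. Then it is NOT the case that there exists Q > 0 with δ_D((w+z)/2) ≥ Q · δ_{H_w}((w+z)/2) for all pairs of distinct points w, z ∈ ∂D. Equivalently: if D is a strictly convex open set with unique supporting half-space at each boundary point and there exists Q > 0 such that δ_D((w+z)/2) ≥ Q · δ_{H_w}((w+z)/2) for all distinct w, z ∈ ∂D, then D is bounded. -/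
open Metric Set Filter Topology

/-- A closed half-space is closed. -/
lemma halfspace_isClosed {n : ℕ} (v : EuclideanSpace ℝ (Fin n)) (c : ℝ) :
    IsClosed {x : EuclideanSpace ℝ (Fin n) | c ≤ (inner ℝ x v : ℝ)} :=
  isClosed_le continuous_const (continuous_id.inner continuous_const)

/-- Lower bound for distance to the complement of a half-space. -/
lemma infDist_compl_halfspace_ge {n : ℕ} (v : EuclideanSpace ℝ (Fin n)) (c : ℝ)
    (hv : ‖v‖ = 1) (m : EuclideanSpace ℝ (Fin n)) :
    (inner ℝ m v : ℝ) - c ≤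
      Metric.infDist m {x : EuclideanSpace ℝ (Fin n) | c ≤ (inner ℝ x v : ℝ)}ᶜ := by
  have hvv : (inner ℝ v v : ℝ) = 1 := by
    rw [real_inner_self_eq_norm_sq, hv]; norm_num
  by_contra h
  push_neg at h
  have hne : ({x : EuclideanSpace ℝ (Fin n) | c ≤ (inner ℝ x v : ℝ)}ᶜ).Nonempty := by
    refine ⟨m - (|(inner ℝ m v : ℝ) - c| + 1) • v, ?_⟩
    simp only [Set.mem_compl_iff, Set.mem_setOf_eq, not_le]
    rw [inner_sub_left, real_inner_smul_left, hvv]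
    have h1 := le_abs_self ((inner ℝ m v : ℝ) - c)
    nlinarith [abs_nonneg ((inner ℝ m v : ℝ) - c)]
  rw [Metric.infDist_lt_iff hne] at h
  obtain ⟨y, hy, hdy⟩ := h
  simp only [Set.mem_compl_iff, Set.mem_setOf_eq, not_le] at hy
  have h2 : (inner ℝ (m - y) v : ℝ) ≤ ‖m - y‖ := by
    calc (inner ℝ (m - y) v : ℝ) ≤ ‖m - y‖ * ‖v‖ := real_inner_le_norm _ _
    _ = ‖m - y‖ := by rw [hv, mul_one]
  rw [dist_eq_norm] at hdy
  rw [inner_sub_left] at h2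
  linarith

/-- Upper bound for distance to the complement of a half-space. -/
lemma infDist_compl_halfspace_le {n : ℕ} (v : EuclideanSpace ℝ (Fin n)) (c : ℝ)
    (hv : ‖v‖ = 1) (m : EuclideanSpace ℝ (Fin n)) (hm : c ≤ (inner ℝ m v : ℝ)) :
    Metric.infDist m {x : EuclideanSpace ℝ (Fin n) | c ≤ (inner ℝ x v : ℝ)}ᶜ ≤
      (inner ℝ m v : ℝ) - c := by
  have hvv : (inner ℝ v v : ℝ) = 1 := by
    rw [real_inner_self_eq_norm_sq, hv]; norm_num
  refine le_of_forall_pos_le_add ?_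
  intro ε hε
  have hmem : m - ((inner ℝ m v : ℝ) - c + ε) • v ∈
      {x : EuclideanSpace ℝ (Fin n) | c ≤ (inner ℝ x v : ℝ)}ᶜ := by
    simp only [Set.mem_compl_iff, Set.mem_setOf_eq, not_le]
    rw [inner_sub_left, real_inner_smul_left, hvv]
    linarith
  calc Metric.infDist m {x : EuclideanSpace ℝ (Fin n) | c ≤ (inner ℝ x v : ℝ)}ᶜ
      ≤ dist m (m - ((inner ℝ m v : ℝ) - c + ε) • v) := Metric.infDist_le_dist_of_mem hmem
    _ = (inner ℝ m v : ℝ) - c + ε := by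
        rw [dist_eq_norm]
        have : m - (m - ((inner ℝ m v : ℝ) - c + ε) • v) = ((inner ℝ m v : ℝ) - c + ε) • v := by
          abel
        rw [this, norm_smul, hv, mul_one, Real.norm_eq_abs, abs_of_nonneg (by linarith)]

set_option maxHeartbeats 1000000 in
/-- Let `n ≥ 2` and let `D ⊊ ℝⁿ` be a nonempty open convex set which is strictly convex
(the open segment between any two distinct points of the closure lies in `D`) and has a
unique supporting closed half-space at each boundary point. If there is `Q > 0` such that
`δ_D((w+z)/2) ≥ Q·δ_{H_w}((w+z)/2)` for all distinct boundary points `w, z` (where `H_w`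
is the supporting half-space at `w`), then `D` is bounded. -/
theorem stmt8 (n : ℕ) (hn : 2 ≤ n) (D : Set (EuclideanSpace ℝ (Fin n)))
    (hDopen : IsOpen D) (hDconv : Convex ℝ D) (hDne : D.Nonempty)
    (hDproper : D ≠ Set.univ)
    (hstrict : ∀ x ∈ closure D, ∀ y ∈ closure D, x ≠ y →
      ∀ θ : ℝ, 0 < θ → θ < 1 → (1 - θ) • x + θ • y ∈ D)
    (huniq : ∀ w ∈ frontier D, ∃! vc : EuclideanSpace ℝ (Fin n) × ℝ,
      ‖vc.1‖ = 1 ∧ D ⊆ {x : EuclideanSpace ℝ (Fin n) | vc.2 ≤ (inner ℝ x vc.1 : ℝ)} ∧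
        (inner ℝ w vc.1 : ℝ) = vc.2)
    (hQ : ∃ Q : ℝ, 0 < Q ∧ ∀ w ∈ frontier D, ∀ z ∈ frontier D, w ≠ z →
      ∀ (v : EuclideanSpace ℝ (Fin n)) (c : ℝ), ‖v‖ = 1 →
        D ⊆ {x : EuclideanSpace ℝ (Fin n) | c ≤ (inner ℝ x v : ℝ)} →
        (inner ℝ w v : ℝ) = c →
        Q * Metric.infDist ((2 : ℝ)⁻¹ • (w + z))
            {x : EuclideanSpace ℝ (Fin n) | c ≤ (inner ℝ x v : ℝ)}ᶜ ≤
          Metric.infDist ((2 : ℝ)⁻¹ • (w + z)) Dᶜ) :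
    Bornology.IsBounded D := by
  obtain ⟨Q, hQpos, hQ⟩ := hQ
  by_contra hb
  -- Step 1: the frontier contains points of arbitrarily large norm.
  have hfar : ∀ R : ℝ, ∃ z ∈ frontier D, R < ‖z‖ := by
    intro R
    by_contra hcon
    push_neg at hcon
    rw [isBounded_iff_forall_norm_le] at hb
    push_neg at hb
    obtain ⟨x, hxD, hx⟩ := hb (max R 0)
    set r := ‖x‖ with hr
    have hrR : R < r := lt_of_le_of_lt (le_max_left _ _) hx
    have hr0 : 0 < r := lt_of_le_of_lt (le_max_right _ _) hx
    have hrank : 1 < Module.rank ℝ (EuclideanSpace ℝ (Fin n)) := by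
      rw [← Module.finrank_eq_rank, finrank_euclideanSpace_fin]
      exact_mod_cast lt_of_lt_of_le one_lt_two hn
    have hsph : IsPreconnected (Metric.sphere (0 : EuclideanSpace ℝ (Fin n)) r) :=
      (isConnected_sphere hrank 0 hr0.le).isPreconnected
    have hcov : Metric.sphere (0 : EuclideanSpace ℝ (Fin n)) r ⊆ D ∪ (closure D)ᶜ := by
      intro y hy
      rw [mem_sphere_zero_iff_norm] at hy
      by_cases hyD : y ∈ D
      · exact Or.inl hyD
      · refine Or.inr fun hyc => ?_
        have hyf : y ∈ frontier D := by
          rw [hDopen.frontier_eq]; exact ⟨hyc, hyD⟩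
        have := hcon y hyf
        rw [hy] at this
        exact absurd this (not_le.mpr hrR)
    have hdisj : Disjoint D (closure D)ᶜ :=
      Set.disjoint_compl_right_iff_subset.mpr subset_closure
    have hsubD : Metric.sphere (0 : EuclideanSpace ℝ (Fin n)) r ⊆ D :=
      hsph.subset_left_of_subset_union hDopen isClosed_closure.isOpen_compl hdisj hcov
        ⟨x, mem_sphere_zero_iff_norm.mpr rfl, hxD⟩
    -- every point of norm < r is in D
    have hball : ∀ y : EuclideanSpace ℝ (Fin n), ‖y‖ < r → y ∈ D := by
      intro y hy
      rcases eq_or_ne y 0 with rfl | hy0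
      · have hnpos : 0 < n := by omega
        set e : EuclideanSpace ℝ (Fin n) := EuclideanSpace.single (⟨0, hnpos⟩ : Fin n) (1 : ℝ)
          with he
        have hen : ‖e‖ = 1 := by rw [he, EuclideanSpace.norm_single]; norm_num
        have h1 : r • e ∈ D := hsubD (by
          rw [mem_sphere_zero_iff_norm, norm_smul, hen, mul_one, Real.norm_eq_abs,
            abs_of_pos hr0])
        have h2 : -(r • e) ∈ D := hsubD (by
          rw [mem_sphere_zero_iff_norm, norm_neg, norm_smul, hen, mul_one, Real.norm_eq_abs,
            abs_of_pos hr0])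
        have := hDconv h1 h2 (by norm_num : (0:ℝ) ≤ 1/2) (by norm_num : (0:ℝ) ≤ 1/2)
          (by norm_num)
        convert this using 1
        simp
      · have hyn : 0 < ‖y‖ := norm_pos_iff.mpr hy0
        set p : EuclideanSpace ℝ (Fin n) := (r / ‖y‖) • y with hp
        have hpn : ‖p‖ = r := by
          rw [hp, norm_smul, Real.norm_eq_abs, abs_of_pos (div_pos hr0 hyn)]
          field_simp
        have h1 : p ∈ D := hsubD (mem_sphere_zero_iff_norm.mpr hpn)
        have h2 : -p ∈ D := hsubD (by rw [mem_sphere_zero_iff_norm, norm_neg]; exact hpn)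
        have ht1 : 0 ≤ ‖y‖ / r := div_nonneg hyn.le hr0.le
        have ht2 : ‖y‖ / r < 1 := (div_lt_one hr0).mpr hy
        have hcomb := hDconv h1 h2
          (by linarith : (0:ℝ) ≤ (1 + ‖y‖/r)/2) (by linarith : (0:ℝ) ≤ (1 - ‖y‖/r)/2)
          (by ring)
        have heq : ((1 + ‖y‖/r)/2) • p + ((1 - ‖y‖/r)/2) • (-p) = y := by
          rw [smul_neg, ← sub_eq_add_neg, ← sub_smul]
          have h3 : (1 + ‖y‖/r)/2 - (1 - ‖y‖/r)/2 = ‖y‖/r := by ring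
          rw [h3, hp, smul_smul]
          have h4 : ‖y‖ / r * (r / ‖y‖) = 1 := by field_simp
          rw [h4, one_smul]
        rwa [heq] at hcomb
    -- hence the frontier is empty, so D is clopen, so D = univ
    have hfront : frontier D = ∅ := by
      rw [Set.eq_empty_iff_forall_notMem]
      intro y hyf
      have hyD : y ∈ D := hball y (lt_of_le_of_lt (hcon y hyf) hrR)
      rw [hDopen.frontier_eq] at hyf
      exact hyf.2 hyD
    have hclopen : IsClopen D := isClopen_iff_frontier_eq_empty.mpr hfront
    exact hDproper (hclopen.eq_univ hDne)
  -- Step 2: extract a sequence of frontier points going to infinity with a limit direction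
  have hzex : ∀ k : ℕ, ∃ z, z ∈ frontier D ∧ (k : ℝ) < ‖z‖ := by
    intro k; obtain ⟨z, h1, h2⟩ := hfar k; exact ⟨z, h1, h2⟩
  choose z hzf hzn using hzex
  have hzpos : ∀ k, 0 < ‖z k‖ := fun k => lt_of_le_of_lt (Nat.cast_nonneg k) (hzn k)
  set u : ℕ → EuclideanSpace ℝ (Fin n) := fun k => (‖z k‖)⁻¹ • z k with hu
  have hus : ∀ k, u k ∈ Metric.sphere (0 : EuclideanSpace ℝ (Fin n)) 1 := by
    intro k
    rw [mem_sphere_zero_iff_norm, hu]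
    simp only [norm_smul, norm_inv, norm_norm]
    exact inv_mul_cancel₀ (hzpos k).ne'
  obtain ⟨θ, hθmem, φ, hφ, hconv⟩ :=
    (isCompact_sphere (0 : EuclideanSpace ℝ (Fin n)) 1).tendsto_subseq hus
  have hθ : ‖θ‖ = 1 := mem_sphere_zero_iff_norm.mp hθmem
  have hrtend : Tendsto (fun k => ‖z (φ k)‖) atTop atTop := by
    apply tendsto_atTop_mono (f := fun k : ℕ => (k : ℝ))
    · intro k
      calc (k : ℝ) ≤ (φ k : ℝ) := by exact_mod_cast hφ.le_apply
      _ ≤ ‖z (φ k)‖ := (hzn (φ k)).le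
    · exact tendsto_natCast_atTop_atTop
  -- Step 3: θ is a recession direction of closure D
  have hrec : ∀ x ∈ closure D, x + θ ∈ closure D := by
    intro x hx
    have htend : Tendsto
        (fun k => (1 - (‖z (φ k)‖)⁻¹) • x + (‖z (φ k)‖)⁻¹ • z (φ k)) atTop (𝓝 (x + θ)) := by
      have h1 : Tendsto (fun k => (1 - (‖z (φ k)‖)⁻¹ : ℝ)) atTop (𝓝 1) := by
        have := hrtend.inv_tendsto_atTop
        have h2 := tendsto_const_nhds (x := (1:ℝ)) (f := atTop (α := ℕ)) |>.sub this
        simpa using h2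
      have h3 : Tendsto (fun k => (1 - (‖z (φ k)‖)⁻¹) • x) atTop (𝓝 ((1:ℝ) • x)) :=
        h1.smul tendsto_const_nhds
      have h4 : Tendsto (fun k => (‖z (φ k)‖)⁻¹ • z (φ k)) atTop (𝓝 θ) := by
        exact hconv
      have := h3.add h4
      rwa [one_smul] at this
    refine isClosed_closure.mem_of_tendsto htend ?_
    filter_upwards [hrtend.eventually_ge_atTop 1] with k hk
    have h0 : (0:ℝ) ≤ (‖z (φ k)‖)⁻¹ := inv_nonneg.mpr (hzpos _).le
    have h1 : (‖z (φ k)‖)⁻¹ ≤ 1 := by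
      rw [inv_le_one_iff₀]; right; exact hk
    exact hDconv.closure hx (frontier_subset_closure (hzf (φ k)))
      (by linarith) h0 (by ring)
  -- Step 4: supporting half-space at a fixed frontier point w := z 0
  set w : EuclideanSpace ℝ (Fin n) := z 0 with hw
  have hwf : w ∈ frontier D := hzf 0
  obtain ⟨⟨v, c⟩, ⟨hv1, hvD, hvc⟩, -⟩ := huniq w hwf
  dsimp only at hv1 hvD hvc
  have hclH : closure D ⊆ {x : EuclideanSpace ℝ (Fin n) | c ≤ (inner ℝ x v : ℝ)} :=
    closure_minimal hvD (halfspace_isClosed v c)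
  set α : ℝ := (inner ℝ θ v : ℝ) with hα
  have hα0 : 0 ≤ α := by
    have h1 : w + θ ∈ closure D := hrec w (frontier_subset_closure hwf)
    have h2 := hclH h1
    simp only [Set.mem_setOf_eq, inner_add_left] at h2
    rw [hvc] at h2
    linarith
  have hαpos : 0 < α := by
    rcases hα0.lt_or_eq with h | h
    · exact h
    · exfalso
      have h1 : w + θ + θ ∈ closure D :=
        hrec _ (hrec w (frontier_subset_closure hwf))
      have hne : w ≠ w + θ + θ := by
        intro heq
        have : θ + θ = 0 := by
          have := heq.symm
          rwa [add_assoc, add_eq_left] at this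
        have h2 : ‖θ + θ‖ = 0 := by rw [this, norm_zero]
        have h3 : ‖θ + θ‖ = 2 := by
          have : θ + θ = (2:ℝ) • θ := by module
          rw [this, norm_smul, hθ]; norm_num
        linarith
      have hmemD : w + θ ∈ D := by
        have := hstrict w (frontier_subset_closure hwf) (w + θ + θ) h1 hne
          (2⁻¹ : ℝ) (by norm_num) (by norm_num)
        have heq : (1 - (2⁻¹:ℝ)) • w + (2⁻¹:ℝ) • (w + θ + θ) = w + θ := by module
        rwa [heq] at this
      -- but w + θ lies on the boundary hyperplane, contradicting openness
      obtain ⟨ε, hε, hball2⟩ := Metric.isOpen_iff.mp hDopen _ hmemD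
      have hyD : w + θ - (ε/2) • v ∈ D := by
        apply hball2
        rw [mem_ball_iff_norm]
        have : w + θ - (ε/2) • v - (w + θ) = -((ε/2) • v) := by abel
        rw [this, norm_neg, norm_smul, hv1, mul_one, Real.norm_eq_abs,
          abs_of_pos (by linarith)]
        linarith
      have := hvD hyD
      simp only [Set.mem_setOf_eq, inner_sub_left, inner_add_left, real_inner_smul_left] at this
      rw [hvc, real_inner_self_eq_norm_sq, hv1, ← hα, ← h] at this
      nlinarith
  -- Step 5: choose a far frontier point z (φ k) with direction close to θ
  set W : ℝ := ‖w‖ with hW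
  have hW0 : 0 ≤ W := norm_nonneg _
  set δ : ℝ := min (α/2) (Q*α/4) with hδ
  have hδpos : 0 < δ := lt_min (by linarith) (by positivity)
  set Rb : ℝ := max (4*W*(1+Q)/(Q*α)) W with hRb
  obtain ⟨k, hk1, hk2⟩ :=
    ((Metric.tendsto_nhds.mp hconv δ hδpos).and (hrtend.eventually_ge_atTop (Rb + 1))).exists
  set Z : EuclideanSpace ℝ (Fin n) := z (φ k) with hZ
  set r : ℝ := ‖Z‖ with hr
  have hr0 : 0 < r := hzpos (φ k)
  set U : EuclideanSpace ℝ (Fin n) := u (φ k) with hU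
  have hZU : Z = r • U := by
    rw [hU, hu]
    simp only []
    rw [smul_smul, mul_inv_cancel₀ hr0.ne', one_smul]
  have hdist : ‖U - θ‖ < δ := by
    have := hk1
    rwa [Function.comp_apply, dist_eq_norm] at this
  have hZf : Z ∈ frontier D := hzf (φ k)
  have hrbig : Rb + 1 ≤ r := hk2
  have hwZ : w ≠ Z := by
    intro heq
    have : W = r := by rw [hW, heq]
    have hWRb : W ≤ Rb := le_max_right _ _
    linarith
  -- supporting half-space at Z
  obtain ⟨⟨v', c'⟩, ⟨hv'1, hv'D, hv'c⟩, -⟩ := huniq Z hZf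
  dsimp only at hv'1 hv'D hv'c
  have hclH' : closure D ⊆ {x : EuclideanSpace ℝ (Fin n) | c' ≤ (inner ℝ x v' : ℝ)} :=
    closure_minimal hv'D (halfspace_isClosed v' c')
  have hθv' : 0 ≤ (inner ℝ θ v' : ℝ) := by
    have h1 : Z + θ ∈ closure D := hrec Z (frontier_subset_closure hZf)
    have h2 := hclH' h1
    simp only [Set.mem_setOf_eq, inner_add_left] at h2
    rw [hv'c] at h2
    linarith
  -- the midpoint lies in D
  set m : EuclideanSpace ℝ (Fin n) := (2:ℝ)⁻¹ • (w + Z) with hm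
  have hmD : m ∈ D := by
    have := hstrict w (frontier_subset_closure hwf) Z (frontier_subset_closure hZf) hwZ
      (2⁻¹ : ℝ) (by norm_num) (by norm_num)
    have heq : (1 - (2⁻¹:ℝ)) • w + (2⁻¹:ℝ) • Z = m := by rw [hm]; module
    rwa [heq] at this
  -- apply the hypothesis hQ
  have hmain := hQ w hwf Z hZf hwZ v c hv1 hvD hvc
  have hlow := infDist_compl_halfspace_ge v c hv1 m
  have hub1 : Metric.infDist m Dᶜ ≤
      Metric.infDist m {x : EuclideanSpace ℝ (Fin n) | c' ≤ (inner ℝ x v' : ℝ)}ᶜ := by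
    apply Metric.infDist_le_infDist_of_subset (Set.compl_subset_compl.mpr hv'D)
    refine ⟨Z - v', ?_⟩
    simp only [Set.mem_compl_iff, Set.mem_setOf_eq, not_le, inner_sub_left]
    rw [hv'c, real_inner_self_eq_norm_sq, hv'1]
    norm_num
  have hub2 := infDist_compl_halfspace_le v' c' hv'1 m (hv'D hmD)
  have hchain : Q * ((inner ℝ m v : ℝ) - c) ≤ (inner ℝ m v' : ℝ) - c' := by
    calc Q * ((inner ℝ m v : ℝ) - c)
        ≤ Q * Metric.infDist m {x : EuclideanSpace ℝ (Fin n) | c ≤ (inner ℝ x v : ℝ)}ᶜ :=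
          mul_le_mul_of_nonneg_left hlow hQpos.le
      _ ≤ Metric.infDist m Dᶜ := hmain
      _ ≤ Metric.infDist m {x : EuclideanSpace ℝ (Fin n) | c' ≤ (inner ℝ x v' : ℝ)}ᶜ := hub1
      _ ≤ (inner ℝ m v' : ℝ) - c' := hub2
  -- compute the inner ℝ products
  have hmv : (inner ℝ m v : ℝ) = 2⁻¹ * ((inner ℝ w v : ℝ) + (inner ℝ Z v : ℝ)) := by
    rw [hm, real_inner_smul_left, inner_add_left]
  have hmv' : (inner ℝ m v' : ℝ) = 2⁻¹ * ((inner ℝ w v' : ℝ) + (inner ℝ Z v' : ℝ)) := by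
    rw [hm, real_inner_smul_left, inner_add_left]
  have hZv : (inner ℝ Z v : ℝ) = r * (inner ℝ U v : ℝ) := by
    rw [hZU, real_inner_smul_left]
  have hZv' : (inner ℝ Z v' : ℝ) = r * (inner ℝ U v' : ℝ) := by
    rw [hZU, real_inner_smul_left]
  have hUv : α - δ ≤ (inner ℝ U v : ℝ) := by
    have h1 : |(inner ℝ (U - θ) v : ℝ)| ≤ ‖U - θ‖ * ‖v‖ := abs_real_inner_le_norm _ _
    rw [hv1, mul_one] at h1
    have h2 : (inner ℝ (U - θ) v : ℝ) = (inner ℝ U v : ℝ) - α := by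
      rw [inner_sub_left, hα]
    have h3 := abs_le.mp h1
    linarith [h3.1, hdist]
  have hUv' : -δ ≤ (inner ℝ U v' : ℝ) := by
    have h1 : |(inner ℝ (U - θ) v' : ℝ)| ≤ ‖U - θ‖ * ‖v'‖ := abs_real_inner_le_norm _ _
    rw [hv'1, mul_one] at h1
    have h2 : (inner ℝ (U - θ) v' : ℝ) = (inner ℝ U v' : ℝ) - (inner ℝ θ v' : ℝ) := by
      rw [inner_sub_left]
    have h3 := abs_le.mp h1
    linarith [h3.1, hdist]
  have hwv : c ≤ W := by
    rw [← hvc, hW]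
    calc (inner ℝ w v : ℝ) ≤ ‖w‖ * ‖v‖ := real_inner_le_norm _ _
    _ = ‖w‖ := by rw [hv1, mul_one]
  have hwv' : (inner ℝ w v' : ℝ) ≤ W := by
    rw [hW]
    calc (inner ℝ w v' : ℝ) ≤ ‖w‖ * ‖v'‖ := real_inner_le_norm _ _
    _ = ‖w‖ := by rw [hv'1, mul_one]
  -- final numeric contradiction
  have hA : Q * ((inner ℝ Z v : ℝ) - c) ≤ (inner ℝ w v' : ℝ) - c' := by
    rw [hmv, hmv', hvc, ← hv'c] at hchain
    rw [← hv'c]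
    linarith
  have hp1 : r * (α - δ) ≤ r * (inner ℝ U v : ℝ) := mul_le_mul_of_nonneg_left hUv hr0.le
  have hp2 : r * (-δ) ≤ r * (inner ℝ U v' : ℝ) := mul_le_mul_of_nonneg_left hUv' hr0.le
  have hB : Q * (r * (α - δ) - W) ≤ W + r * δ := by
    have h1 : r * (α - δ) - W ≤ (inner ℝ Z v : ℝ) - c := by
      rw [hZv]; linarith
    have h2 : Q * (r * (α - δ) - W) ≤ Q * ((inner ℝ Z v : ℝ) - c) :=
      mul_le_mul_of_nonneg_left h1 hQpos.le
    have h3 : (inner ℝ w v' : ℝ) - c' ≤ W + r * δ := by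
      rw [← hv'c, hZv']; linarith
    linarith
  have hδ1 : δ ≤ α/2 := min_le_left _ _
  have hδ2 : δ ≤ Q*α/4 := min_le_right _ _
  have hQα : 0 < Q * α := mul_pos hQpos hαpos
  have hRb1 : 4*W*(1+Q)/(Q*α) ≤ Rb := le_max_left _ _
  have hr1 : 4*W*(1+Q)/(Q*α) + 1 ≤ r := by linarith
  have hdiv : 4*W*(1+Q) ≤ (r - 1) * (Q*α) := by
    rw [div_le_iff₀ hQα] at hRb1
    have : Rb ≤ r - 1 := by linarith
    nlinarith
  nlinarith [mul_le_mul_of_nonneg_left hδ2 hr0.le, mul_le_mul_of_nonneg_left hδ1 hr0.le,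
    mul_le_mul_of_nonneg_left (mul_le_mul_of_nonneg_left hδ1 hr0.le) hQpos.le, hB, hdiv,
    hQα, hW0, hr0]
end

section
/- Let f : [0,∞) → ℝ be differentiable, increasing and strictly convex, with f(x) → ∞ as x → ∞. Then lim_{x→∞} min( f(x) - 2 f(x/2), x ) / f(x) = 0. -/
open Filter

/-- Let `f : [0,∞) → ℝ` be differentiable, increasing and strictly convex with
`f(x) → ∞` as `x → ∞`. Then `min(f(x) - 2f(x/2), x)/f(x) → 0` as `x → ∞`. -/
theorem stmt16 (f : ℝ → ℝ)
    (hdiff : DifferentiableOn ℝ f (Set.Ici 0))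
    (hmono : MonotoneOn f (Set.Ici 0))
    (hconv : StrictConvexOn ℝ (Set.Ici 0) f)
    (hlim : Filter.Tendsto f Filter.atTop Filter.atTop) :
    Filter.Tendsto (fun x => min (f x - 2 * f (x / 2)) x / f x)
      Filter.atTop (nhds 0) := by
  have hconv' : ConvexOn ℝ (Set.Ici 0) f := hconv.convexOn
  set φ : ℝ → ℝ := fun x => (f x - f 0) / x with hφdef
  have hφmono : ∀ a b : ℝ, 0 < a → a ≤ b → φ a ≤ φ b := by
    intro a b ha hab
    have hb : (0:ℝ) < b := lt_of_lt_of_le ha hab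
    have := hconv'.secant_mono (a := 0) (x := a) (y := b)
      (Set.self_mem_Ici) (le_of_lt ha) (le_of_lt hb) (ne_of_gt ha) (ne_of_gt hb) hab
    simpa [φ] using this
  set ψ : ℝ → ℝ := fun x => φ (max x 1) with hψdef
  have hψmono : Monotone ψ := by
    intro a b hab
    exact hφmono _ _ (lt_of_lt_of_le one_pos (le_max_right a 1))
      (max_le_max hab le_rfl)
  have hψeq : ∀ᶠ x in atTop, ψ x = φ x := by
    filter_upwards [eventually_ge_atTop (1:ℝ)] with x hx
    simp [ψ, max_eq_left hx]
  -- midpoint convexity: lower bound on f x - 2 f (x/2)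
  have hmid : ∀ x : ℝ, 0 ≤ x → f 0 + f x ≥ 2 * f (x / 2) := by
    intro x hx
    have h := hconv'.2 (Set.self_mem_Ici) (hx : x ∈ Set.Ici 0)
      (by norm_num : (0:ℝ) ≤ (1:ℝ)/2) (by norm_num : (0:ℝ) ≤ (1:ℝ)/2) (by norm_num)
    have h2 : f ((1/2 : ℝ) * 0 + (1/2 : ℝ) * x) ≤ (1/2) * f 0 + (1/2) * f x := by
      simpa [smul_eq_mul] using h
    have heq : (1/2 : ℝ) * 0 + (1/2 : ℝ) * x = x / 2 := by ring
    rw [heq] at h2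
    linarith
  have hfpos : ∀ᶠ x in atTop, (0:ℝ) < f x := hlim.eventually_gt_atTop 0
  -- lower bound function tends to 0
  have hlow0 : Tendsto (fun x => -|f 0| / f x) atTop (nhds 0) :=
    tendsto_const_nhds.div_atTop hlim
  have hlow : ∀ᶠ x in atTop, -|f 0| / f x ≤ min (f x - 2 * f (x / 2)) x / f x := by
    filter_upwards [hfpos, eventually_ge_atTop (0:ℝ)] with x hfx hx
    have h1 : -|f 0| ≤ f x - 2 * f (x / 2) := by
      have := hmid x hx
      have := le_abs_self (f 0)
      linarith
    have h2 : -|f 0| ≤ x := le_trans (neg_nonpos_of_nonneg (abs_nonneg _)) hx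
    gcongr
    exact le_min h1 h2
  rcases tendsto_of_monotone hψmono with htop | ⟨l, hl⟩
  · -- superlinear case: use min ≤ x
    have hfx_div : Tendsto (fun x => f x / x) atTop atTop := by
      have h1 : Tendsto φ atTop atTop := htop.congr' hψeq
      have h2 : Tendsto (fun x => f 0 / x) atTop (nhds 0) :=
        tendsto_const_nhds.div_atTop tendsto_id
      have h3 : Tendsto (fun x => φ x + f 0 / x) atTop atTop := h1.atTop_add h2
      apply h3.congr'
      filter_upwards [eventually_gt_atTop (0:ℝ)] with x hx
      field_simp [φ]
      simp only [hφdef]; rw [div_mul_cancel₀ _ hx.ne']; ring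
    have hxf : Tendsto (fun x => x / f x) atTop (nhds 0) := by
      have := hfx_div.inv_tendsto_atTop
      apply this.congr'
      filter_upwards [hfpos, eventually_gt_atTop (0:ℝ)] with x hfx hx
      simp [Pi.inv_apply, inv_div]
    apply tendsto_of_tendsto_of_tendsto_of_le_of_le' hlow0 hxf hlow
    filter_upwards [hfpos] with x hfx
    gcongr
    exact min_le_right _ _
  · -- asymptotically linear case
    have hφl : Tendsto φ atTop (nhds l) := hl.congr' hψeq
    have hlpos : 0 < l := by
      obtain ⟨x₀, hx₀f, hx₀1⟩ :=
        ((hlim.eventually_gt_atTop (f 0)).and (eventually_ge_atTop (1:ℝ))).exists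
      have h1 : 0 < φ x₀ := div_pos (by linarith) (by linarith)
      have h2 : ψ x₀ ≤ l := hψmono.ge_of_tendsto hl x₀
      have h3 : ψ x₀ = φ x₀ := by simp [ψ, max_eq_left hx₀1]
      linarith [h3 ▸ h2]
    have hfx_div : Tendsto (fun x => f x / x) atTop (nhds l) := by
      have h2 : Tendsto (fun x => f 0 / x) atTop (nhds 0) :=
        tendsto_const_nhds.div_atTop tendsto_id
      have h3 : Tendsto (fun x => φ x + f 0 / x) atTop (nhds (l + 0)) := hφl.add h2
      rw [add_zero] at h3
      apply h3.congr'
      filter_upwards [eventually_gt_atTop (0:ℝ)] with x hx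
      field_simp [φ]
      simp only [hφdef]; rw [div_mul_cancel₀ _ hx.ne']; ring
    have hhalf : Tendsto (fun x => f (x/2) / x) atTop (nhds (l/2)) := by
      have hc : Tendsto (fun x : ℝ => x / 2) atTop atTop :=
        tendsto_id.atTop_div_const two_pos
      have h1 : Tendsto (fun x => f (x/2) / (x/2)) atTop (nhds l) := hfx_div.comp hc
      have h2 := h1.div_const 2
      apply h2.congr'
      filter_upwards [eventually_gt_atTop (0:ℝ)] with x hx
      field_simp
    have hratio : Tendsto (fun x => f (x/2) / f x) atTop (nhds (1/2)) := by
      have h1 := hhalf.div hfx_div (ne_of_gt hlpos)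
      have h2 : l / 2 / l = 1/2 := by field_simp
      rw [h2] at h1
      apply h1.congr'
      filter_upwards [hfpos, eventually_gt_atTop (0:ℝ)] with x hfx hx
      simp only [Pi.div_apply]
      field_simp
    have hupper : Tendsto (fun x => (f x - 2 * f (x/2)) / f x) atTop (nhds 0) := by
      have h1 : Tendsto (fun x => 1 - 2 * (f (x/2) / f x)) atTop
          (nhds (1 - 2 * (1/2))) := (tendsto_const_nhds.sub (hratio.const_mul 2))
      norm_num at h1
      apply h1.congr'
      filter_upwards [hfpos] with x hfx
      field_simp
    apply tendsto_of_tendsto_of_tendsto_of_le_of_le' hlow0 hupper hlow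
    filter_upwards [hfpos] with x hfx
    gcongr
    exact min_le_left _ _
end
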